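/- arXiv:1112.6014 — 4 statements merged into one kernel-verified Lean document; each statement's English description precedes it below -/
import Mathlib

section
/- Let v=(v_1,…,v_n) and p=(p_1,…,p_n) be 0–1 vectors having the same, positive, number of ones. Then there exists a permutation σ of [n] with val σ = v and pos σ = p if and only if for every index i with 1 ≤ i ≤ n, the number of ones among p_1,…,p_i is strictly greater than the number of ones among v_1,…,v_{i-1}. Moreover, in this case there is exactly one 321-avoiding permutation σ of [n] with val σ = v and pos σ = p. -/
open Finset MvPolynomial

/-- `σ` avoids the pattern 321. -/
def Avoids321 {n : ℕ} (σ : Equiv.Perm (Fin n)) : Prop :=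
  ¬ ∃ i j k : Fin n, i < j ∧ j < k ∧ σ k < σ j ∧ σ j < σ i

instance {n : ℕ} : DecidablePred (Avoids321 (n := n)) := fun σ => by
  unfold Avoids321; infer_instance

/-- The set of 321-avoiding permutations of `{1,…,n}` (modelled on `Fin n`). -/
def Av (n : ℕ) : Finset (Equiv.Perm (Fin n)) := univ.filter Avoids321

/-- The number of inversions of a permutation. -/
def invPerm {n : ℕ} (σ : Equiv.Perm (Fin n)) : ℕ :=
  (univ.filter (fun p : Fin n × Fin n => p.1 < p.2 ∧ σ p.2 < σ p.1)).card

/-- Position `i` is a left-right maximum of `σ`. -/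
def IsLRMax {n : ℕ} (σ : Equiv.Perm (Fin n)) (i : Fin n) : Prop :=
  ∀ j, j ≤ i → σ j ≤ σ i

instance {n : ℕ} (σ : Equiv.Perm (Fin n)) : DecidablePred (IsLRMax σ) := fun i => by
  unfold IsLRMax; infer_instance

/-- The number of left-right maxima of `σ`. -/
def lrm {n : ℕ} (σ : Equiv.Perm (Fin n)) : ℕ := (univ.filter (IsLRMax σ)).card

/-- The number of fixed points of `σ`. -/
def fixPerm {n : ℕ} (σ : Equiv.Perm (Fin n)) : ℕ := (univ.filter (fun i => σ i = i)).card

/-- The number of excedances of `σ`. -/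
def excPerm {n : ℕ} (σ : Equiv.Perm (Fin n)) : ℕ := (univ.filter (fun i => i < σ i)).card

/-- The descent set of `σ`: `i` is in it iff `σ` descends from position `i+1` to `i+2`
(0-based index `i` corresponds to the 1-based descent position `i+1`). -/
def DesPerm {n : ℕ} (σ : Equiv.Perm (Fin n)) : Finset (Fin n) :=
  univ.filter (fun i => ∃ h : i.val + 1 < n, σ ⟨i.val + 1, h⟩ < σ i)

/-- The number of descents of `σ`. -/
def desPerm {n : ℕ} (σ : Equiv.Perm (Fin n)) : ℕ := (DesPerm σ).card

/-- The major index of `σ` (descents at 1-based positions). -/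
def majPerm {n : ℕ} (σ : Equiv.Perm (Fin n)) : ℕ := ∑ i ∈ DesPerm σ, (i.val + 1)

/-- Number of `true` letters among the first `i` letters of the word `P`. -/
def UpCt {m : ℕ} (P : Fin m → Bool) (i : ℕ) : ℕ :=
  (univ.filter (fun j : Fin m => j.val < i ∧ P j = true)).card

/-- Number of `false` letters among the first `i` letters of the word `P`. -/
def DownCt {m : ℕ} (P : Fin m → Bool) (i : ℕ) : ℕ :=
  (univ.filter (fun j : Fin m => j.val < i ∧ P j = false)).card

/-- A word (with `true` = U, `false` = D) is a Dyck word: every prefix has at least as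
many U's as D's, and the total numbers of U's and D's agree. -/
def IsDyck {m : ℕ} (P : Fin m → Bool) : Prop :=
  (∀ i, i ≤ m → DownCt P i ≤ UpCt P i) ∧ UpCt P m = DownCt P m

instance {m : ℕ} : DecidablePred (IsDyck (m := m)) := fun P => by
  unfold IsDyck; infer_instance

/-- The Dyck paths of semilength `n`, as words of length `2n`. -/
def DyckSet (n : ℕ) : Finset (Fin (2 * n) → Bool) := univ.filter IsDyck

/-- Valleys (descents of the word, i.e. factors `DU`), recorded by the 0-based
index of the `D` step. -/
def Valleys {m : ℕ} (P : Fin m → Bool) : Finset (Fin m) :=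
  univ.filter (fun j => P j = false ∧ ∃ h : j.val + 1 < m, P ⟨j.val + 1, h⟩ = true)

/-- `des` of a path: the number of valleys. -/
def desPath {m : ℕ} (P : Fin m → Bool) : ℕ := (Valleys P).card

/-- `maj` of a path: the sum of the (1-based) positions of the descents. -/
def majPath {m : ℕ} (P : Fin m → Bool) : ℕ := ∑ j ∈ Valleys P, (j.val + 1)

/-- `α(P) = Σ_{i ∈ Des P} |p_i(P)|_U`. -/
def alphaPath {m : ℕ} (P : Fin m → Bool) : ℕ := ∑ j ∈ Valleys P, UpCt P (j.val + 1)

/-- `β(P) = Σ_{i ∈ Des P} |p_i(P)|_D`. -/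
def betaPath {m : ℕ} (P : Fin m → Bool) : ℕ := ∑ j ∈ Valleys P, DownCt P (j.val + 1)

/-- Peaks (factors `UD`), recorded by the 0-based index of the `U` step. -/
def Peaks {m : ℕ} (P : Fin m → Bool) : Finset (Fin m) :=
  univ.filter (fun j => P j = true ∧ ∃ h : j.val + 1 < m, P ⟨j.val + 1, h⟩ = false)

/-- The number of peaks of `P`. -/
def npea {m : ℕ} (P : Fin m → Bool) : ℕ := (Peaks P).card

/-- `spea P = Σ_p (HT(p) - 1)` over peaks `p`, where `HT` is the height of a peak. -/
def spea {m : ℕ} (P : Fin m → Bool) : ℕ :=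
  ∑ j ∈ Peaks P, (UpCt P (j.val + 1) - DownCt P (j.val + 1) - 1)

/-- The height of the path after `i` steps. -/
def htAt {m : ℕ} (P : Fin m → Bool) (i : ℕ) : ℤ := (UpCt P i : ℤ) - (DownCt P i : ℤ)

/-- The start of the tunnel of the valley whose lowest lattice point comes after
`k` steps: the largest `m < k` at which the path has the same height. -/
def tunnelStart {m : ℕ} (P : Fin m → Bool) (k : ℕ) : ℕ :=
  ((Finset.range k).filter (fun j => htAt P j = htAt P k)).sup id

/-- `stun P`: the sum over all valleys of the semilengths of their tunnels. -/
def stun {m : ℕ} (P : Fin m → Bool) : ℕ :=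
  ∑ j ∈ Valleys P, (j.val + 1 - tunnelStart P (j.val + 1)) / 2

/-- A parallelogram polyomino: a pair `(U,V)` of `N/E`-paths (`true` = N, `false` = E)
of the same length, with the same endpoints, such that `U` stays strictly above `V`
except at the endpoints (i.e. every proper nonempty prefix of `U` contains strictly
more `N`-steps than the corresponding prefix of `V`).  As noted by Fürlinger and
Hofbauer, the lower path begins with an `E`-step and the upper path ends with an
`E`-step; this is automatic for `m ≥ 2` and fixes the convention in the degenerate
case `m = 1`. -/
def IsParaPoly {m : ℕ} (U V : Fin m → Bool) : Prop :=
  UpCt U m = UpCt V m ∧ (∀ i, i < m → 1 ≤ i → UpCt V i < UpCt U i) ∧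
    UpCt V 1 = 0 ∧ UpCt U m = UpCt U (m - 1)

instance {m : ℕ} (U V : Fin m → Bool) : Decidable (IsParaPoly U V) := by
  unfold IsParaPoly; infer_instance

/-- The parallelogram polyominoes of size `n`. -/
def ParaSet (n : ℕ) : Finset ((Fin n → Bool) × (Fin n → Bool)) :=
  univ.filter (fun UV => IsParaPoly UV.1 UV.2)

/-- A shortened polyomino: a pair `(P,Q)` of `N/E`-paths of the same length with the
same endpoints such that `P` stays weakly above `Q` and the two paths share no
`N`-steps (an `N`-step is shared exactly when it occurs at the same index with equal
prefix `N`-counts). -/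
def IsShortPoly {m : ℕ} (P Q : Fin m → Bool) : Prop :=
  UpCt P m = UpCt Q m ∧ (∀ i, i ≤ m → UpCt Q i ≤ UpCt P i) ∧
    ∀ j : Fin m, UpCt P j.val = UpCt Q j.val → ¬(P j = true ∧ Q j = true)

instance {m : ℕ} (P Q : Fin m → Bool) : Decidable (IsShortPoly P Q) := by
  unfold IsShortPoly; infer_instance

/-- The shortened polyominoes of size `n`. -/
def ShortSet (n : ℕ) : Finset ((Fin n → Bool) × (Fin n → Bool)) :=
  univ.filter (fun PQ => IsShortPoly PQ.1 PQ.2)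

/-- The sum, over the `E`-steps of a path, of their heights (`N`-count before the step). -/
def eSum {m : ℕ} (W : Fin m → Bool) : ℕ :=
  ∑ j ∈ univ.filter (fun j : Fin m => W j = false), UpCt W j.val

/-- The area between the upper path `U` and the lower path `V`. -/
def areaPoly {m : ℕ} (U V : Fin m → Bool) : ℕ := eSum U - eSum V

/-- The number of columns spanned: the number of `E`-steps of the path. -/
def colPoly {m : ℕ} (W : Fin m → Bool) : ℕ := (univ.filter (fun j : Fin m => W j = false)).card

/-- `I_n(q,t) = Σ_{σ ∈ Av_n(321)} q^{inv σ} t^{lrm σ}`, with `q = X 0`, `t = X 1`. -/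
noncomputable def IPoly (n : ℕ) : MvPolynomial (Fin 2) ℤ :=
  ∑ σ ∈ Av n, X 0 ^ invPerm σ * X 1 ^ lrm σ

/-- `M_n(q,t) = Σ_{σ ∈ Av_n(321)} q^{maj σ} t^{des σ}`, with `q = X 0`, `t = X 1`. -/
noncomputable def MPoly (n : ℕ) : MvPolynomial (Fin 2) ℤ :=
  ∑ σ ∈ Av n, X 0 ^ majPerm σ * X 1 ^ desPerm σ

/-- `I_n(q,t,x) = Σ_{σ ∈ Av_n(321)} q^{inv σ} t^{lrm σ} x^{fix σ}`,
with `q = X 0`, `t = X 1`, `x = X 2`. -/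
noncomputable def IPoly3 (n : ℕ) : MvPolynomial (Fin 3) ℤ :=
  ∑ σ ∈ Av n, X 0 ^ invPerm σ * X 1 ^ lrm σ * X 2 ^ fixPerm σ

/-- `C_n(a,b;t) = Σ_{P ∈ D_n} a^{α(P)} b^{β(P)} t^{des P}`,
with `a = X 0`, `b = X 1`, `t = X 2`. -/
noncomputable def CPoly (n : ℕ) : MvPolynomial (Fin 3) ℤ :=
  ∑ P ∈ DyckSet n, X 0 ^ alphaPath P * X 1 ^ betaPath P * X 2 ^ desPath P

/-- `P_n(q,t) = Σ_{(U,V) ∈ 𝒫_n} q^{area(U,V)} t^{col(U,V)}`, with `q = X 0`, `t = X 1`. -/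
noncomputable def PPoly (n : ℕ) : MvPolynomial (Fin 2) ℤ :=
  ∑ UV ∈ ParaSet n, X 0 ^ areaPoly UV.1 UV.2 * X 1 ^ colPoly UV.1

/-- `I_n(-1,t) = Σ_{σ ∈ Av_n(321)} (-1)^{inv σ} t^{lrm σ} ∈ ℤ[t]`. -/
noncomputable def ISign (n : ℕ) : Polynomial ℤ :=
  ∑ σ ∈ Av n, Polynomial.C ((-1 : ℤ) ^ invPerm σ) * Polynomial.X ^ lrm σ

/-- Substitution `t ↦ q^k t` for polynomials in `q = X 0`, `t = X 1`. -/
noncomputable def subT (k : ℕ) (f : MvPolynomial (Fin 2) ℤ) : MvPolynomial (Fin 2) ℤ :=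
  bind₁ (fun i : Fin 2 => if i = 0 then X 0 else X 0 ^ k * X 1) f

/-- Substitution `t ↦ u` (third variable) for polynomials in `a = X 0`, `b = X 1`, `t = X 2`. -/
noncomputable def subT3 (u : MvPolynomial (Fin 3) ℤ) (f : MvPolynomial (Fin 3) ℤ) :
    MvPolynomial (Fin 3) ℤ :=
  bind₁ (fun i : Fin 3 => if i = 2 then u else X i) f

/-- Substitution `x ↦ 1` (third variable) for polynomials in `q = X 0`, `t = X 1`, `x = X 2`. -/
noncomputable def subX1 (f : MvPolynomial (Fin 3) ℤ) : MvPolynomial (Fin 3) ℤ :=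
  bind₁ (fun i : Fin 3 => if i = 2 then 1 else X i) f

/-- `val σ`: indicator vector of left-right maximum values (`val σ i = 1` iff the value `i`
occurs at a left-right maximum position of `σ`). -/
def valVec {n : ℕ} (σ : Equiv.Perm (Fin n)) (i : Fin n) : ℕ :=
  if ∃ j, IsLRMax σ j ∧ σ j = i then 1 else 0

/-- `pos σ`: indicator vector of left-right maximum positions. -/
def posVec {n : ℕ} (σ : Equiv.Perm (Fin n)) (i : Fin n) : ℕ :=
  if IsLRMax σ i then 1 else 0

/-!
Left-right maxima of any permutation increase from left to right, and a permutation avoids 321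
exactly when its remaining entries increase as well. A 321-avoiding permutation is therefore the
merge of the increasing bijection from its left-right maximum positions onto its left-right
maximum values with the increasing bijection between the complements, which gives uniqueness.

For existence, merge in this way the positions `A = {p = 1}` with the values `B = {v = 1}`. The
prefix condition forces the entry at each position `j ∉ A` below the entry at the last position
of `A` before `j`, so the left-right maximum positions are exactly `A`. Conversely, for any
permutation the maximum of the first `i + 1` entries sits at a left-right maximum with value at
least `i`, while each left-right maximum value below `i` is taken at another left-right maximum
before `i`.
-/

namespace Equiv.Perm

variable {α : Type*} [LinearOrder α] {p q : α → Prop}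

theorem eqOn_of_strictMonoOn [Finite α] {σ τ : Perm α} (hσ : ∀ a, q (σ a) ↔ p a)
    (hτ : ∀ a, q (τ a) ↔ p a) (hσm : StrictMonoOn σ {a | p a})
    (hτm : StrictMonoOn τ {a | p a}) : Set.EqOn σ τ {a | p a} := by
  let restrict (π : Perm α) (hπ : ∀ a, q (π a) ↔ p a) (hπm : StrictMonoOn π {a | p a}) :
      {a // p a} ≃o {a // q a} :=
    StrictMono.orderIsoOfSurjective (fun a => ⟨π a, (hπ a).2 a.2⟩)
      (fun a b hab => hπm a.2 b.2 hab)
      (fun b => ⟨⟨π.symm b, (hπ _).1 (by simpa using b.2)⟩, by simp⟩)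
  intro a ha
  exact congrArg (fun e => (e ⟨a, ha⟩ : α))
    (Subsingleton.elim (restrict σ hσ hσm) (restrict τ hτ hτm))

theorem eq_of_strictMonoOn [Finite α] {σ τ : Perm α} (hσ : ∀ a, q (σ a) ↔ p a)
    (hτ : ∀ a, q (τ a) ↔ p a) (hσm : StrictMonoOn σ {a | p a})
    (hτm : StrictMonoOn τ {a | p a}) (hσm' : StrictMonoOn σ {a | ¬p a})
    (hτm' : StrictMonoOn τ {a | ¬p a}) : σ = τ := by
  ext a
  by_cases ha : p a
  · exact eqOn_of_strictMonoOn hσ hτ hσm hτm ha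
  · exact eqOn_of_strictMonoOn (q := fun b => ¬q b) (fun a => (hσ a).not) (fun a => (hτ a).not)
      hσm' hτm' ha

theorem exists_strictMonoOn [Fintype α] [DecidablePred p] [DecidablePred q]
    (h : Fintype.card {a // p a} = Fintype.card {a // q a}) :
    ∃ σ : Perm α,
      (∀ a, q (σ a) ↔ p a) ∧ StrictMonoOn σ {a | p a} ∧ StrictMonoOn σ {a | ¬p a} := by
  have h' : Fintype.card {a // ¬p a} = Fintype.card {a // ¬q a} := by
    simp only [Fintype.card_subtype_compl, h]
  let e := (monoEquivOfFin {a // p a} rfl).symm.trans (monoEquivOfFin {a // q a} h.symm)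
  let f := (monoEquivOfFin {a // ¬p a} rfl).symm.trans (monoEquivOfFin {a // ¬q a} h'.symm)
  have hin {a} (ha : p a) : Equiv.subtypeCongr e.toEquiv f.toEquiv a = e ⟨a, ha⟩ := by
    simp [Equiv.subtypeCongr, ha]
  have hout {a} (ha : ¬p a) : Equiv.subtypeCongr e.toEquiv f.toEquiv a = f ⟨a, ha⟩ := by
    simp [Equiv.subtypeCongr, ha]
  refine ⟨Equiv.subtypeCongr e.toEquiv f.toEquiv, fun a => ?_, fun a ha b hb hab => ?_,
    fun a ha b hb hab => ?_⟩
  · by_cases ha : p a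
    · simpa [hin ha, ha] using (e ⟨a, ha⟩).2
    · simpa [hout ha, ha] using (f ⟨a, ha⟩).2
  · rw [hin ha, hin hb]
    exact e.strictMono (show (⟨a, ha⟩ : {a // p a}) < ⟨b, hb⟩ from hab)
  · rw [hout ha, hout hb]
    exact f.strictMono (show (⟨a, ha⟩ : {a // ¬p a}) < ⟨b, hb⟩ from hab)

end Equiv.Perm

section LRMax

variable {n : ℕ} {σ : Equiv.Perm (Fin n)}

theorem le_apply_of_forall_le_apply {i m : Fin n} (h : ∀ j ≤ i, σ j ≤ σ m) :
    i ≤ σ m := by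
  have hsub : (Iic i).image σ ⊆ Iic (σ m) := by
    intro x hx
    obtain ⟨j, hj, rfl⟩ := mem_image.1 hx
    exact mem_Iic.2 (h j (mem_Iic.1 hj))
  have hcard := card_le_card hsub
  rw [card_image_of_injective _ σ.injective, Fin.card_Iic, Fin.card_Iic] at hcard
  exact Fin.le_def.2 (by omega)

theorem IsLRMax.le_apply {l : Fin n} (h : IsLRMax σ l) : l ≤ σ l :=
  le_apply_of_forall_le_apply h

theorem exists_isLRMax_le_apply (σ : Equiv.Perm (Fin n)) (i : Fin n) :
    ∃ m ≤ i, IsLRMax σ m ∧ i ≤ σ m := by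
  obtain ⟨m, hm, hmax⟩ := exists_max_image (Iic i) σ ⟨i, mem_Iic.2 le_rfl⟩
  have hmax' : ∀ j ≤ i, σ j ≤ σ m := fun j hj => hmax j (mem_Iic.2 hj)
  exact ⟨m, mem_Iic.1 hm, fun j hj => hmax' j (hj.trans (mem_Iic.1 hm)),
    le_apply_of_forall_le_apply hmax'⟩

theorem card_lrMaxValues_lt_card_lrMaxPositions (σ : Equiv.Perm (Fin n)) (i : Fin n) :
    #{b ∈ Iio i | ∃ l, IsLRMax σ l ∧ σ l = b} < #{l ∈ Iic i | IsLRMax σ l} := by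
  obtain ⟨m, hmi, hm, him⟩ := exists_isLRMax_le_apply σ i
  have hmem : m ∈ {l ∈ Iic i | IsLRMax σ l} := mem_filter.2 ⟨mem_Iic.2 hmi, hm⟩
  refine (card_le_card_of_injOn σ.symm (fun b hb => ?_) σ.symm.injective.injOn).trans_lt
    (card_erase_lt_of_mem hmem)
  obtain ⟨hbi, l, hl, rfl⟩ := mem_filter.1 hb
  have hli : σ l < i := mem_Iio.1 hbi
  rw [Equiv.symm_apply_apply, mem_coe, mem_erase, mem_filter, mem_Iic]
  exact ⟨by rintro rfl; exact him.not_gt hli, (hl.le_apply.trans_lt hli).le, hl⟩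

theorem strictMonoOn_isLRMax (σ : Equiv.Perm (Fin n)) : StrictMonoOn σ {i | IsLRMax σ i} :=
  fun _ _ _ hj hij => (hj _ hij.le).lt_of_ne (σ.injective.ne hij.ne)

theorem avoids321_iff_strictMonoOn : Avoids321 σ ↔ StrictMonoOn σ {i | ¬IsLRMax σ i} := by
  simp only [Avoids321, IsLRMax, not_exists, not_and, not_forall, not_le]
  constructor
  · rintro h i ⟨g, hgi, hg⟩ j - hij
    refine lt_of_not_ge fun hji => h g i j ?_ hij (hji.lt_of_ne (σ.injective.ne hij.ne')) hg
    exact hgi.lt_of_ne (by rintro rfl; exact hg.false)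
  · intro h g i j hgi hij hji hig
    exact (h ⟨g, hgi.le, hig⟩ ⟨i, hij.le, hji⟩ hij).not_gt hji

theorem isLRMax_iff_mem_of_strictMonoOn {A : Finset (Fin n)}
    (hA : StrictMonoOn σ {a | a ∈ A}) (hAc : ∀ j ∉ A, ∃ a ∈ A, a < j ∧ σ j < σ a)
    (i : Fin n) : IsLRMax σ i ↔ i ∈ A := by
  constructor
  · intro hi
    by_contra hiA
    obtain ⟨a, -, hai, hlt⟩ := hAc i hiA
    exact (hi a hai.le).not_gt hlt
  · intro hiA j hji
    by_cases hjA : j ∈ A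
    · exact hA.le_iff_le hjA hiA |>.2 hji
    · obtain ⟨a, haA, haj, hlt⟩ := hAc j hjA
      exact hlt.le.trans (hA.le_iff_le haA hiA |>.2 (haj.le.trans hji))

end LRMax

section Construction

variable {n : ℕ} {σ : Equiv.Perm (Fin n)} {A B : Finset (Fin n)}

theorem exists_mem_lt_and_apply_lt (hσ : ∀ a, σ a ∈ B ↔ a ∈ A)
    (hA : StrictMonoOn σ {a | a ∈ A}) (hAc : StrictMonoOn σ {a | a ∉ A})
    (hC : ∀ i, #(B ∩ Iio i) < #(A ∩ Iic i)) {j : Fin n} (hj : j ∉ A) :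
    ∃ a ∈ A, a < j ∧ σ j < σ a := by
  have hne : (A ∩ Iic j).Nonempty := card_pos.1 ((Nat.zero_le _).trans_lt (hC j))
  set a := (A ∩ Iic j).max' hne
  obtain ⟨haA, haj⟩ := mem_inter.1 (max'_mem _ hne)
  have haj : a < j := (mem_Iic.1 haj).lt_of_ne fun h => hj (h ▸ haA)
  refine ⟨a, haA, haj, ?_⟩
  have hle : #(A ∩ Iic j) ≤ #(B ∩ Iic (σ a)) := by
    refine card_le_card_of_injOn σ (fun x hx => ?_) σ.injective.injOn
    obtain ⟨hxA, -⟩ := mem_inter.1 hx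
    exact mem_inter.2 ⟨(hσ x).2 hxA, mem_Iic.2 ((hA.le_iff_le hxA haA).2 (le_max' _ x hx))⟩
  have hja : j ≤ σ a := by
    by_contra! h
    have hsub : B ∩ Iic (σ a) ⊆ B ∩ Iio j :=
      inter_subset_inter_left fun x hx => mem_Iio.2 ((mem_Iic.1 hx).trans_lt h)
    exact (hC j).not_ge (hle.trans (card_le_card hsub))
  refine lt_of_not_ge fun hge => ?_
  have hlt : σ a < σ j := hge.lt_of_ne (σ.injective.ne haj.ne)
  -- every value up to `σ a` is taken before position `j`, leaving no room for `j ≤ σ a`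
  have hsub : Iic (σ a) ⊆ (Iio j).image σ := by
    intro b hb
    refine mem_image.2 ⟨σ.symm b, mem_Iio.2 ?_, σ.apply_symm_apply b⟩
    have hb' : σ (σ.symm b) ≤ σ a := by simpa using mem_Iic.1 hb
    by_cases hx : σ.symm b ∈ A
    · exact ((hA.le_iff_le hx haA).1 hb').trans_lt haj
    · exact (hAc.lt_iff_lt hx hj).1 (hb'.trans_lt hlt)
  have hcard := (card_le_card hsub).trans card_image_le
  rw [Fin.card_Iic, Fin.card_Iio] at hcard
  exact hja.not_gt (Fin.lt_def.2 (by omega))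

theorem existsUnique_avoids321_of_card_lt (hAB : #A = #B)
    (hC : ∀ i, #(B ∩ Iio i) < #(A ∩ Iic i)) :
    ∃! σ : Equiv.Perm (Fin n),
      Avoids321 σ ∧ (∀ i, IsLRMax σ i ↔ i ∈ A) ∧ ∀ i, σ i ∈ B ↔ i ∈ A := by
  obtain ⟨σ, hσ, hA, hAc⟩ :=
    Equiv.Perm.exists_strictMonoOn (p := (· ∈ A)) (q := (· ∈ B)) (by simpa using hAB)
  have hLR := isLRMax_iff_mem_of_strictMonoOn hA
    fun j hj => exists_mem_lt_and_apply_lt hσ hA hAc hC hj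
  refine ⟨σ, ⟨avoids321_iff_strictMonoOn.2 ?_, hLR, hσ⟩, ?_⟩
  · simpa only [hLR] using hAc
  · rintro τ ⟨hτ, hτLR, hτB⟩
    refine Equiv.Perm.eq_of_strictMonoOn hτB hσ ?_ hA ?_ hAc
    · simpa only [hτLR] using strictMonoOn_isLRMax τ
    · simpa only [hτLR] using avoids321_iff_strictMonoOn.1 hτ

end Construction

section Indicators

variable {ι : Type*} {w : ι → ℕ}

theorem sum_eq_card_filter_eq_one (hw : ∀ i, w i ≤ 1) (s : Finset ι) :
    ∑ i ∈ s, w i = #{i ∈ s | w i = 1} := by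
  rw [card_filter]
  refine sum_congr rfl fun i _ => ?_
  rcases Nat.le_one_iff_eq_zero_or_eq_one.1 (hw i) with h | h <;> simp [h]

theorem ite_one_zero_eq_iff (hw : ∀ i, w i ≤ 1) {P : ι → Prop} [DecidablePred P] :
    (fun i => if P i then 1 else 0) = w ↔ ∀ i, P i ↔ w i = 1 := by
  refine funext_iff.trans (forall_congr' fun i => ?_)
  have := hw i
  split_ifs with h <;> simp only [h, true_iff, false_iff] <;> omega

end Indicators

section Vectors

variable {n : ℕ} {σ : Equiv.Perm (Fin n)}

theorem posVec_eq_iff {p : Fin n → ℕ} (hp : ∀ i, p i ≤ 1) :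
    posVec σ = p ↔ ∀ i, IsLRMax σ i ↔ p i = 1 :=
  ite_one_zero_eq_iff hp

theorem valVec_eq_iff {v : Fin n → ℕ} (hv : ∀ i, v i ≤ 1) :
    valVec σ = v ↔ ∀ i, IsLRMax σ i ↔ v (σ i) = 1 := by
  unfold valVec
  rw [ite_one_zero_eq_iff hv, ← σ.forall_congr_right]
  simp [σ.injective.eq_iff]

end Vectors

theorem stmt2_general {n : ℕ} (v p : Fin n → ℕ) (hv : ∀ i, v i ≤ 1) (hp : ∀ i, p i ≤ 1)
    (heq : ∑ i, v i = ∑ i, p i) :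
    ((∃ σ : Equiv.Perm (Fin n), valVec σ = v ∧ posVec σ = p) ↔
      ∀ i : Fin n, ∑ j ∈ Finset.Iio i, v j < ∑ j ∈ Finset.Iic i, p j) ∧
    ((∀ i : Fin n, ∑ j ∈ Finset.Iio i, v j < ∑ j ∈ Finset.Iic i, p j) →
      ∃! σ : Equiv.Perm (Fin n), σ ∈ Av n ∧ valVec σ = v ∧ posVec σ = p) := by
  set A : Finset (Fin n) := {i | p i = 1}
  set B : Finset (Fin n) := {i | v i = 1}
  have hAB : #A = #B := by
    simpa [sum_eq_card_filter_eq_one hv, sum_eq_card_filter_eq_one hp] using heq.symm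
  have hcond : (∀ i, ∑ j ∈ Iio i, v j < ∑ j ∈ Iic i, p j) ↔
      ∀ i, #(B ∩ Iio i) < #(A ∩ Iic i) := by
    simp only [sum_eq_card_filter_eq_one hv, sum_eq_card_filter_eq_one hp, A, B,
      filter_inter, univ_inter]
  have hvecs (σ : Equiv.Perm (Fin n)) : valVec σ = v ∧ posVec σ = p ↔
      (∀ i, IsLRMax σ i ↔ i ∈ A) ∧ ∀ i, σ i ∈ B ↔ i ∈ A := by
    simp only [valVec_eq_iff hv, posVec_eq_iff hp, A, B, mem_filter, mem_univ, true_and]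
    exact ⟨fun ⟨hval, hpos⟩ => ⟨hpos, fun i => (hval i).symm.trans (hpos i)⟩,
      fun ⟨hpos, hval⟩ => ⟨fun i => (hpos i).trans (hval i).symm, hpos⟩⟩
  refine ⟨⟨?_, fun h => ?_⟩, fun h => ?_⟩
  · rintro ⟨σ, rfl, rfl⟩ i
    simpa [valVec, posVec] using card_lrMaxValues_lt_card_lrMaxPositions σ i
  · obtain ⟨σ, ⟨-, hσ⟩, -⟩ := existsUnique_avoids321_of_card_lt hAB (hcond.1 h)
    exact ⟨σ, (hvecs σ).2 hσ⟩
  · simpa only [Av, mem_filter, mem_univ, true_and, hvecs] using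
      existsUnique_avoids321_of_card_lt hAB (hcond.1 h)

/-- characterization of the pairs `(val σ, pos σ)`, and uniqueness of the
321-avoiding permutation with prescribed `val` and `pos`. -/
theorem stmt2 {n : ℕ} (v p : Fin n → ℕ) (hv : ∀ i, v i ≤ 1) (hp : ∀ i, p i ≤ 1)
    (heq : ∑ i, v i = ∑ i, p i) (hpos : 0 < ∑ i, p i) :
    ((∃ σ : Equiv.Perm (Fin n), valVec σ = v ∧ posVec σ = p) ↔
      ∀ i : Fin n, ∑ j ∈ Finset.Iio i, v j < ∑ j ∈ Finset.Iic i, p j) ∧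
    ((∀ i : Fin n, ∑ j ∈ Finset.Iio i, v j < ∑ j ∈ Finset.Iic i, p j) →
      ∃! σ : Equiv.Perm (Fin n), σ ∈ Av n ∧ valVec σ = v ∧ posVec σ = p) :=
  stmt2_general v p hv hp heq
end

section
/- For every integer n ≥ 1 there exists a bijection Γ from Av_n(321) to the set D_n of Dyck paths of semilength n such that for every π ∈ Av_n(321), lrm π = npea Γ(π) and inv π = spea Γ(π) = Σ_p (HT(p)−1), where the sum is over all peaks p of Γ(π). -/
open Finset MvPolynomial

namespace Stmt5Aux

/-- cardinality of an initial segment of `Fin n`. -/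
lemma card_filter_lt (n m : ℕ) :
    (univ.filter (fun j : Fin n => j.val < m)).card = min m n := by
  have h : ∀ a ∈ Finset.range (min m n), a < n := by
    intro a ha; rw [Finset.mem_range] at ha; omega
  have : (univ.filter (fun j : Fin n => j.val < m)) = (Finset.range (min m n)).attachFin h := by
    ext j
    simp only [Finset.mem_filter, Finset.mem_univ, true_and, Finset.mem_attachFin,
      Finset.mem_range]
    omega
  rw [this, Finset.card_attachFin, Finset.card_range]

variable {n : ℕ}

/-- `pm σ d` is one plus the maximum of the first `d+1` values of `σ` (1-based prefix max). -/
def pm (σ : Equiv.Perm (Fin n)) (d : ℕ) : ℕ :=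
  (univ.filter (fun j : Fin n => j.val ≤ d)).sup (fun j => (σ j).val + 1)

lemma le_pm {σ : Equiv.Perm (Fin n)} {j : Fin n} {d : ℕ} (h : j.val ≤ d) :
    (σ j).val + 1 ≤ pm σ d :=
  Finset.le_sup (f := fun j => (σ j).val + 1) (by simp [h])

lemma pm_mono (σ : Equiv.Perm (Fin n)) {d e : ℕ} (h : d ≤ e) : pm σ d ≤ pm σ e :=
  Finset.sup_mono (by intro j hj; simp at hj ⊢; omega)

lemma pm_le (σ : Equiv.Perm (Fin n)) (d : ℕ) : pm σ d ≤ n :=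
  Finset.sup_le (fun j _ => (σ j).isLt)

lemma succ_le_pm (σ : Equiv.Perm (Fin n)) {d : ℕ} (hd : d < n) : d + 1 ≤ pm σ d := by
  classical
  set S := univ.filter (fun j : Fin n => j.val ≤ d) with hS
  have hcard : S.card = d + 1 := by
    have := card_filter_lt n (d + 1)
    have h2 : S = univ.filter (fun j : Fin n => j.val < d + 1) := by
      ext j; simp [hS]
    rw [h2, this]; omega
  have hsub : S.image (fun j => (σ j).val) ⊆ Finset.range (pm σ d) := by
    intro v hv
    simp only [Finset.mem_image] at hv
    obtain ⟨j, hj, rfl⟩ := hv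
    simp only [hS, Finset.mem_filter] at hj
    have := le_pm (σ := σ) hj.2
    simp [Finset.mem_range]; omega
  have hinj : (S.image (fun j => (σ j).val)).card = d + 1 := by
    rw [Finset.card_image_of_injective _ (fun a b hab => σ.injective (Fin.val_injective hab)),
      hcard]
  have := Finset.card_le_card hsub
  rw [hinj, Finset.card_range] at this
  exact this

lemma pm_succ (σ : Equiv.Perm (Fin n)) {d : ℕ} (hd : d + 1 < n) :
    pm σ (d + 1) = max (pm σ d) ((σ ⟨d + 1, hd⟩).val + 1) := by
  have h : (univ.filter (fun j : Fin n => j.val ≤ d + 1))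
      = insert (⟨d + 1, hd⟩ : Fin n) (univ.filter (fun j : Fin n => j.val ≤ d)) := by
    ext j
    simp [Fin.ext_iff]
    omega
  rw [pm, h, Finset.sup_insert]
  simp [pm, max_comm]


section LR
variable {σ : Equiv.Perm (Fin n)}

lemma isLRMax_iff {i : Fin n} : IsLRMax σ i ↔ pm σ i.val = (σ i).val + 1 := by
  constructor
  · intro h
    have h1 : pm σ i.val ≤ (σ i).val + 1 := by
      apply Finset.sup_le
      intro j hj
      simp only [Finset.mem_filter] at hj
      have := h j (by exact hj.2)
      omega
    have h2 := le_pm (σ := σ) (j := i) (le_refl _)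
    omega
  · intro h j hj
    have := le_pm (σ := σ) (j := j) (d := i.val) hj
    rw [h] at this
    exact Fin.le_def.mpr (by omega)

lemma isLRMax_zero (h0 : 0 < n) : IsLRMax σ ⟨0, h0⟩ := by
  intro j hj
  have hj0 : j = ⟨0, h0⟩ := Fin.ext (by simpa using Fin.le_def.mp hj)
  rw [hj0]

lemma isLRMax_jump {i : Fin n} (hi : 0 < i.val) :
    IsLRMax σ i ↔ pm σ (i.val - 1) < pm σ i.val := by
  have hsucc : pm σ i.val = max (pm σ (i.val - 1)) ((σ i).val + 1) := by
    have h := pm_succ σ (d := i.val - 1) (by omega)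
    have : (⟨i.val - 1 + 1, by omega⟩ : Fin n) = i := by apply Fin.ext; simp; omega
    rw [this] at h
    rw [← h]; congr 1; omega
  constructor
  · intro h
    have h1 := isLRMax_iff.mp h
    have h2 : pm σ (i.val - 1) ≤ (σ i).val := by
      apply Finset.sup_le
      intro j hj
      simp only [Finset.mem_filter] at hj
      have hji : j ≤ i := Fin.le_def.mpr (by omega)
      have := h j hji
      have hne : σ j ≠ σ i := fun he => by
        have : j = i := σ.injective he
        rw [this] at hj; omega
      have := Fin.le_def.mp this
      have : (σ j).val < (σ i).val := lt_of_le_of_ne this (fun hv => hne (Fin.ext hv))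
      omega
    omega
  · intro h
    rw [isLRMax_iff]
    omega

/-- key inversion formula for 321-avoiding permutations -/
lemma inv_eq (hσ : Avoids321 σ) :
    invPerm σ = ∑ i ∈ univ.filter (IsLRMax σ), ((σ i).val - i.val) := by
  classical
  -- fiberwise over first coordinate
  have hfib : invPerm σ = ∑ i : Fin n,
      (univ.filter (fun j : Fin n => i < j ∧ σ j < σ i)).card := by
    rw [invPerm, Finset.card_eq_sum_card_fiberwise
      (f := Prod.fst) (t := univ) (fun x _ => Finset.mem_univ _)]
    apply Finset.sum_congr rfl
    intro i _
    apply Finset.card_bij (fun p _ => p.2)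
    · intro p hp
      simp only [Finset.mem_filter, Finset.mem_univ, true_and] at hp ⊢
      obtain ⟨⟨h1, h2⟩, h3⟩ := hp
      rw [h3] at h1 h2
      exact ⟨h1, h2⟩
    · intro p hp q hq hpq
      simp only [Finset.mem_filter] at hp hq
      exact Prod.ext (hp.2.trans hq.2.symm) hpq
    · intro j hj
      simp only [Finset.mem_filter, Finset.mem_univ, true_and] at hj
      refine ⟨(i, j), ?_, rfl⟩
      simp only [Finset.mem_filter, Finset.mem_univ, true_and]
      exact ⟨⟨hj.1, hj.2⟩, trivial⟩
  rw [hfib, ← Finset.sum_filter_add_sum_filter_not univ (IsLRMax σ)]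
  have hnot : ∑ i ∈ univ.filter (fun i => ¬ IsLRMax σ i),
      (univ.filter (fun j : Fin n => i < j ∧ σ j < σ i)).card = 0 := by
    apply Finset.sum_eq_zero
    intro i hi
    simp only [Finset.mem_filter, Finset.mem_univ, true_and] at hi
    rw [Finset.card_eq_zero, Finset.filter_eq_empty_iff]
    intro j _
    rintro ⟨hij, hji⟩
    -- get i' < i with σ i < σ i'
    rw [IsLRMax] at hi
    push_neg at hi
    obtain ⟨i', hi'le, hi'⟩ := hi
    have hlt : σ i < σ i' := hi'
    have hi'lt : i' < i := lt_of_le_of_ne hi'le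
      (fun he => by rw [he] at hlt; exact absurd hlt (lt_irrefl _))
    exact hσ ⟨i', i, j, hi'lt, hij, hji, hlt⟩
  rw [hnot, add_zero]
  apply Finset.sum_congr rfl
  intro i hi
  simp only [Finset.mem_filter, Finset.mem_univ, true_and] at hi
  -- {j : σ j < σ i} has card (σ i).val and splits as {j < i} ⊔ {j > i, σ j < σ i}
  have hcard1 : (univ.filter (fun j : Fin n => σ j < σ i)).card = (σ i).val := by
    have : (univ.filter (fun j : Fin n => σ j < σ i))
        = (univ.filter (fun v : Fin n => v < σ i)).image σ.symm := by
      ext j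
      simp only [Finset.mem_filter, Finset.mem_univ, true_and, Finset.mem_image]
      constructor
      · intro h; exact ⟨σ j, h, by simp⟩
      · rintro ⟨v, hv, rfl⟩; simpa using hv

    rw [this, Finset.card_image_of_injective _ σ.symm.injective]
    have : (univ.filter (fun v : Fin n => v < σ i))
        = (univ.filter (fun v : Fin n => v.val < (σ i).val)) := by
      ext v
      simp only [Finset.mem_filter, Finset.mem_univ, true_and, Fin.lt_def]
    rw [this, card_filter_lt]
    have := (σ i).isLt; omega
  have hsplit : (univ.filter (fun j : Fin n => σ j < σ i))
      = (univ.filter (fun j : Fin n => j < i)) ∪ (univ.filter (fun j : Fin n => i < j ∧ σ j < σ i)) := by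
    ext j
    simp only [Finset.mem_filter, Finset.mem_univ, true_and, Finset.mem_union]
    constructor
    · intro h
      rcases lt_trichotomy j i with hj | hj | hj
      · exact Or.inl hj
      · rw [hj] at h; exact absurd h (lt_irrefl _)
      · exact Or.inr ⟨hj, h⟩
    · rintro (hj | ⟨_, hj⟩)
      · have hle := hi j (le_of_lt hj)
        exact lt_of_le_of_ne hle (fun he => absurd (σ.injective he) (ne_of_lt hj))
      · exact hj
  have hdisj : Disjoint (univ.filter (fun j : Fin n => j < i))
      (univ.filter (fun j : Fin n => i < j ∧ σ j < σ i)) := by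
    rw [Finset.disjoint_left]
    intro j hj1 hj2
    simp only [Finset.mem_filter, Finset.mem_univ, true_and] at hj1 hj2
    exact absurd (hj1.trans hj2.1) (lt_irrefl _)
  have hcard2 : (univ.filter (fun j : Fin n => j < i)).card = i.val := by
    have : (univ.filter (fun j : Fin n => j < i))
        = (univ.filter (fun j : Fin n => j.val < i.val)) := by
      ext v
      simp only [Finset.mem_filter, Finset.mem_univ, true_and, Fin.lt_def]
    rw [this, card_filter_lt]
    have := i.isLt; omega
  have := Finset.card_union_of_disjoint hdisj
  rw [hsplit, this, hcard2] at hcard1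
  omega

end LR
section Path

/-- position (0-based) of the `d`-th down-step of the path associated to `σ`. -/
def Dp (σ : Equiv.Perm (Fin n)) (d : ℕ) : ℕ := pm σ d + d

lemma Dp_lt_Dp (σ : Equiv.Perm (Fin n)) {d e : ℕ} (h : d < e) : Dp σ d < Dp σ e := by
  have := pm_mono σ (le_of_lt h); rw [Dp, Dp]; omega

lemma Dp_le_Dp (σ : Equiv.Perm (Fin n)) {d e : ℕ} (h : d ≤ e) : Dp σ d ≤ Dp σ e := by
  have := pm_mono σ h; rw [Dp, Dp]; omega

lemma Dp_lt_two_n (σ : Equiv.Perm (Fin n)) {d : ℕ} (hd : d < n) : Dp σ d < 2 * n := by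
  have := pm_le σ d; rw [Dp]; omega

lemma two_d_lt_Dp (σ : Equiv.Perm (Fin n)) {d : ℕ} (hd : d < n) : 2 * d + 1 ≤ Dp σ d := by
  have := succ_le_pm σ hd; rw [Dp]; omega

/-- the path associated with `σ` : `false` exactly at positions `Dp σ d`. -/
def Gam (σ : Equiv.Perm (Fin n)) : Fin (2 * n) → Bool :=
  fun p => decide (∀ d, d < n → p.val ≠ Dp σ d)

lemma gam_eq_false_iff {σ : Equiv.Perm (Fin n)} {p : Fin (2 * n)} :
    Gam σ p = false ↔ ∃ d, d < n ∧ p.val = Dp σ d := by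
  rw [Gam, decide_eq_false_iff_not]
  push_neg
  constructor
  · rintro ⟨d, hd, he⟩; exact ⟨d, hd, he⟩
  · rintro ⟨d, hd, he⟩; exact ⟨d, hd, he⟩

lemma gam_eq_true_iff {σ : Equiv.Perm (Fin n)} {p : Fin (2 * n)} :
    Gam σ p = true ↔ ∀ d, d < n → p.val ≠ Dp σ d := by
  rw [Gam, decide_eq_true_eq]

lemma upCt_add_downCt {m : ℕ} (P : Fin m → Bool) (i : ℕ) :
    UpCt P i + DownCt P i = min i m := by
  have h := Finset.card_filter_add_card_filter_not
    (s := univ.filter (fun j : Fin m => j.val < i)) (p := fun j => P j = true)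
  rw [Finset.filter_filter, Finset.filter_filter] at h
  rw [card_filter_lt] at h
  have e2 : (univ.filter (fun j : Fin m => j.val < i ∧ P j = false))
      = (univ.filter (fun j : Fin m => j.val < i ∧ ¬ P j = true)) := by
    ext j
    simp [Bool.not_eq_true]
  rw [UpCt, DownCt, e2, ← h]

lemma downCt_mono {m : ℕ} (P : Fin m → Bool) {i i' : ℕ} (h : i ≤ i') :
    DownCt P i ≤ DownCt P i' := by
  apply Finset.card_le_card
  intro j hj
  simp only [Finset.mem_filter, Finset.mem_univ, true_and] at hj ⊢
  exact ⟨by omega, hj.2⟩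

lemma upCt_mono {m : ℕ} (P : Fin m → Bool) {i i' : ℕ} (h : i ≤ i') :
    UpCt P i ≤ UpCt P i' := by
  apply Finset.card_le_card
  intro j hj
  simp only [Finset.mem_filter, Finset.mem_univ, true_and] at hj ⊢
  exact ⟨by omega, hj.2⟩

lemma downCt_gam (σ : Equiv.Perm (Fin n)) (i : ℕ) :
    DownCt (Gam σ) i = ((Finset.range n).filter (fun d => Dp σ d < i)).card := by
  rw [DownCt]
  symm
  apply Finset.card_bij (fun d hd => (⟨Dp σ d,
    Dp_lt_two_n σ (Finset.mem_range.mp (Finset.mem_filter.mp hd).1)⟩ : Fin (2 * n)))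
  · intro d hd
    simp only [Finset.mem_filter, Finset.mem_range] at hd
    simp only [Finset.mem_filter, Finset.mem_univ, true_and]
    exact ⟨hd.2, gam_eq_false_iff.mpr ⟨d, hd.1, rfl⟩⟩
  · intro d hd e he hde
    simp only [Fin.mk.injEq] at hde
    by_contra hne
    rcases Nat.lt_or_ge d e with h | h
    · exact absurd hde (ne_of_lt (Dp_lt_Dp σ h))
    · exact absurd hde.symm (ne_of_lt (Dp_lt_Dp σ (by omega)))
  · intro j hj
    simp only [Finset.mem_filter, Finset.mem_univ, true_and] at hj
    obtain ⟨d, hd, he⟩ := gam_eq_false_iff.mp hj.2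
    refine ⟨d, ?_, ?_⟩
    · simp only [Finset.mem_filter, Finset.mem_range]
      exact ⟨hd, by omega⟩
    · exact Fin.ext (by simp [he])

lemma downCt_gam_Dp (σ : Equiv.Perm (Fin n)) {d : ℕ} (hd : d < n) :
    DownCt (Gam σ) (Dp σ d) = d := by
  rw [downCt_gam]
  have : (Finset.range n).filter (fun e => Dp σ e < Dp σ d) = Finset.range d := by
    ext e
    simp only [Finset.mem_filter, Finset.mem_range]
    constructor
    · rintro ⟨he, hlt⟩
      by_contra h
      have hde : d ≤ e := by omega
      have := Dp_le_Dp σ hde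
      omega
    · intro he
      exact ⟨by omega, Dp_lt_Dp σ he⟩
  rw [this, Finset.card_range]

lemma isDyck_gam (σ : Equiv.Perm (Fin n)) : IsDyck (Gam σ) := by
  constructor
  · intro i hi
    have hsum := upCt_add_downCt (Gam σ) i
    rw [min_eq_left hi] at hsum
    have hD := downCt_gam σ i
    set c := DownCt (Gam σ) i with hc
    have h2c : 2 * c ≤ i := by
      rcases Nat.eq_zero_or_pos c with h0 | h0
      · omega
      · have : ∃ d ∈ (Finset.range n).filter (fun d => Dp σ d < i), c - 1 ≤ d := by
          by_contra hcon
          push_neg at hcon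
          have hsub : (Finset.range n).filter (fun d => Dp σ d < i) ⊆ Finset.range (c - 1) := by
            intro d hd
            rw [Finset.mem_range]
            have := hcon d hd
            omega
          have := Finset.card_le_card hsub
          rw [← hD, Finset.card_range] at this
          omega
        obtain ⟨d, hd, hcd⟩ := this
        simp only [Finset.mem_filter, Finset.mem_range] at hd
        have := two_d_lt_Dp σ hd.1
        omega
    omega
  · have hD : DownCt (Gam σ) (2 * n) = n := by
      rw [downCt_gam]
      have : (Finset.range n).filter (fun d => Dp σ d < 2 * n) = Finset.range n := by
        apply Finset.filter_true_of_mem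
        intro d hd
        exact Dp_lt_two_n σ (Finset.mem_range.mp hd)
      rw [this, Finset.card_range]
    have := upCt_add_downCt (Gam σ) (2 * n)
    omega

end Path
section Peaks

lemma gam_peak_mem {σ : Equiv.Perm (Fin n)} {i : Fin n} (hi : IsLRMax σ i) :
    (⟨Dp σ i.val - 1, by have := Dp_lt_two_n σ i.isLt; omega⟩ : Fin (2 * n)) ∈ Peaks (Gam σ) := by
  have h1 : 1 ≤ Dp σ i.val := by have := two_d_lt_Dp σ i.isLt; omega
  rw [Peaks, Finset.mem_filter]
  refine ⟨Finset.mem_univ _, ?_, ?_⟩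
  · rw [gam_eq_true_iff]
    intro d hd
    simp only
    rcases Nat.lt_or_ge d i.val with h | h
    · have hipos : 0 < i.val := by omega
      have hj := (isLRMax_jump hipos).mp hi
      have hm := pm_mono σ (show d ≤ i.val - 1 by omega)
      have e1 : Dp σ d = pm σ d + d := rfl
      have e2 : Dp σ i.val = pm σ i.val + i.val := rfl
      omega
    · have := Dp_le_Dp σ h
      omega
  · have hlt : Dp σ i.val - 1 + 1 < 2 * n := by have := Dp_lt_two_n σ i.isLt; omega
    refine ⟨hlt, ?_⟩
    rw [gam_eq_false_iff]
    exact ⟨i.val, i.isLt, by simp; omega⟩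

lemma peaks_gam_exists {σ : Equiv.Perm (Fin n)} {j : Fin (2 * n)} (hj : j ∈ Peaks (Gam σ)) :
    ∃ i : Fin n, IsLRMax σ i ∧ j.val + 1 = Dp σ i.val := by
  rw [Peaks, Finset.mem_filter] at hj
  obtain ⟨-, htrue, hlt, hfalse⟩ := hj
  obtain ⟨d, hd, he⟩ := gam_eq_false_iff.mp hfalse
  simp only at he
  refine ⟨⟨d, hd⟩, ?_, he⟩
  rcases Nat.eq_zero_or_pos d with h0 | h0
  · have hi0 : (⟨d, hd⟩ : Fin n) = ⟨0, by omega⟩ := Fin.ext (by simp [h0])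
    rw [hi0]
    exact isLRMax_zero _
  · rw [isLRMax_jump (show 0 < ((⟨d, hd⟩ : Fin n)).val from h0)]
    simp only
    by_contra hc
    push_neg at hc
    have hmon := pm_mono σ (show d - 1 ≤ d by omega)
    have heq : pm σ (d - 1) = pm σ d := by omega
    have e1 : Dp σ (d - 1) = pm σ (d - 1) + (d - 1) := rfl
    have e2 : Dp σ d = pm σ d + d := rfl
    have hGf : Gam σ j = false := gam_eq_false_iff.mpr ⟨d - 1, by omega, by omega⟩
    rw [htrue] at hGf
    exact Bool.noConfusion hGf

lemma peak_map_inj {σ : Equiv.Perm (Fin n)} :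
    ∀ i₁ ∈ univ.filter (IsLRMax σ), ∀ i₂ ∈ univ.filter (IsLRMax σ),
    (⟨Dp σ i₁.val - 1, by have := Dp_lt_two_n σ i₁.isLt; omega⟩ : Fin (2 * n)) =
      ⟨Dp σ i₂.val - 1, by have := Dp_lt_two_n σ i₂.isLt; omega⟩ → i₁ = i₂ := by
  intro i₁ _ i₂ _ h
  simp only [Fin.mk.injEq] at h
  have g1 : 1 ≤ Dp σ i₁.val := by have := two_d_lt_Dp σ i₁.isLt; omega
  have g2 : 1 ≤ Dp σ i₂.val := by have := two_d_lt_Dp σ i₂.isLt; omega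
  apply Fin.ext
  by_contra hne
  rcases Nat.lt_or_ge i₁.val i₂.val with hlt | hge
  · have := Dp_lt_Dp σ hlt; omega
  · have := Dp_lt_Dp σ (show i₂.val < i₁.val by omega); omega

lemma npea_gam (σ : Equiv.Perm (Fin n)) : npea (Gam σ) = lrm σ := by
  rw [npea, lrm]
  symm
  apply Finset.card_bij
    (fun i hi => (⟨Dp σ i.val - 1, by have := Dp_lt_two_n σ i.isLt; omega⟩ : Fin (2 * n)))
  · intro i hi
    exact gam_peak_mem (Finset.mem_filter.mp hi).2
  · exact peak_map_inj
  · intro j hj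
    obtain ⟨i, hi, he⟩ := peaks_gam_exists hj
    exact ⟨i, Finset.mem_filter.mpr ⟨Finset.mem_univ _, hi⟩, Fin.ext (by simp; omega)⟩

lemma spea_gam (σ : Equiv.Perm (Fin n)) :
    spea (Gam σ) = ∑ i ∈ univ.filter (IsLRMax σ), ((σ i).val - i.val) := by
  rw [spea]
  symm
  apply Finset.sum_bij
    (fun i hi => (⟨Dp σ i.val - 1, by have := Dp_lt_two_n σ i.isLt; omega⟩ : Fin (2 * n)))
  · intro i hi
    exact gam_peak_mem (Finset.mem_filter.mp hi).2
  · exact peak_map_inj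
  · intro j hj
    obtain ⟨i, hi, he⟩ := peaks_gam_exists hj
    exact ⟨i, Finset.mem_filter.mpr ⟨Finset.mem_univ _, hi⟩, Fin.ext (by simp; omega)⟩
  · intro i hi
    have hi' := (Finset.mem_filter.mp hi).2
    have g1 : 1 ≤ Dp σ i.val := by have := two_d_lt_Dp σ i.isLt; omega
    have hstep : Dp σ i.val - 1 + 1 = Dp σ i.val := by omega
    simp only [hstep]
    have hDC := downCt_gam_Dp σ i.isLt
    have hsum := upCt_add_downCt (Gam σ) (Dp σ i.val)
    have hmin : min (Dp σ i.val) (2 * n) = Dp σ i.val :=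
      min_eq_left (le_of_lt (Dp_lt_two_n σ i.isLt))
    have e2 : Dp σ i.val = pm σ i.val + i.val := rfl
    have hval := isLRMax_iff.mp hi'
    omega

end Peaks
section Inj

lemma gam_pm_eq {σ τ : Equiv.Perm (Fin n)} (h : Gam σ = Gam τ) :
    ∀ d, d < n → pm σ d = pm τ d := by
  intro d hd
  have hσf : Gam σ ⟨Dp σ d, Dp_lt_two_n σ hd⟩ = false := gam_eq_false_iff.mpr ⟨d, hd, rfl⟩
  have hτf : Gam τ ⟨Dp σ d, Dp_lt_two_n σ hd⟩ = false := by rw [← h]; exact hσf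
  obtain ⟨d', hd', he⟩ := gam_eq_false_iff.mp hτf
  have he' : Dp σ d = Dp τ d' := he
  have h1 : DownCt (Gam σ) (Dp σ d) = d := downCt_gam_Dp σ hd
  have h2 : DownCt (Gam τ) (Dp τ d') = d' := downCt_gam_Dp τ hd'
  rw [h, he'] at h1
  have hdd : d = d' := h1.symm.trans h2
  subst hdd
  have e1 : Dp σ d = pm σ d + d := rfl
  have e2 : Dp τ d = pm τ d + d := rfl
  omega

lemma eq_of_rank_eq {E : Finset (Fin n)} {x y : Fin n} (hx : x ∈ E) (hy : y ∈ E)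
    (h : (E.filter (fun z => z < x)).card = (E.filter (fun z => z < y)).card) : x = y := by
  by_contra hne
  have key : ∀ a b : Fin n, a ∈ E → b ∈ E → a < b →
      (E.filter (fun z => z < a)).card < (E.filter (fun z => z < b)).card := by
    intro a b ha hb hab
    apply Finset.card_lt_card
    rw [Finset.ssubset_iff_of_subset]
    · exact ⟨a, Finset.mem_filter.mpr ⟨ha, hab⟩,
        fun hc => absurd ((Finset.mem_filter.mp hc).2) (lt_irrefl _)⟩
    · intro z hz
      rw [Finset.mem_filter] at hz ⊢
      exact ⟨hz.1, hz.2.trans hab⟩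
  rcases lt_or_gt_of_ne hne with hlt | hlt
  · exact absurd h (ne_of_lt (key x y hx hy hlt))
  · exact absurd h.symm (ne_of_lt (key y x hy hx hlt))

lemma monoOn_image_eq {B : Finset (Fin n)} {f g : Fin n → Fin n}
    (hf : ∀ i ∈ B, ∀ j ∈ B, i < j → f i < f j)
    (hg : ∀ i ∈ B, ∀ j ∈ B, i < j → g i < g j)
    (him : B.image f = B.image g) : ∀ i ∈ B, f i = g i := by
  have key : ∀ (f : Fin n → Fin n), (∀ i ∈ B, ∀ j ∈ B, i < j → f i < f j) →
      ∀ i ∈ B, ((B.image f).filter (fun z => z < f i)).card = (B.filter (fun z => z < i)).card := by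
    intro f hf i hi
    symm
    apply Finset.card_bij (fun x _ => f x)
    · intro x hx
      rw [Finset.mem_filter] at hx ⊢
      exact ⟨Finset.mem_image_of_mem f hx.1, hf x hx.1 i hi hx.2⟩
    · intro x hx y hy hxy
      rw [Finset.mem_filter] at hx hy
      by_contra hne
      rcases lt_or_gt_of_ne hne with hlt | hlt
      · exact absurd hxy (ne_of_lt (hf x hx.1 y hy.1 hlt))
      · exact absurd hxy.symm (ne_of_lt (hf y hy.1 x hx.1 hlt))
    · intro y hy
      rw [Finset.mem_filter, Finset.mem_image] at hy
      obtain ⟨⟨x, hx, rfl⟩, hlt⟩ := hy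
      refine ⟨x, Finset.mem_filter.mpr ⟨hx, ?_⟩, rfl⟩
      by_contra hc
      push_neg at hc
      rcases eq_or_lt_of_le hc with he | hlt2
      · rw [he] at hlt; exact absurd hlt (lt_irrefl _)
      · exact absurd (hf i hi x hx hlt2) (not_lt.mpr (le_of_lt hlt))
  intro i hi
  apply eq_of_rank_eq (E := B.image f)
    (Finset.mem_image_of_mem f hi) (him ▸ Finset.mem_image_of_mem g hi)
  rw [key f hf i hi, him, key g hg i hi]

end Inj
lemma pm_inj {σ τ : Equiv.Perm (Fin n)} (hσ : Avoids321 σ) (hτ : Avoids321 τ)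
    (h : ∀ d, d < n → pm σ d = pm τ d) : σ = τ := by
  have hLR : ∀ i : Fin n, IsLRMax σ i ↔ IsLRMax τ i := by
    intro i
    rcases Nat.eq_zero_or_pos i.val with h0 | h0
    · have : i = ⟨0, by omega⟩ := Fin.ext (by simp [h0])
      rw [this]
      exact iff_of_true (isLRMax_zero _) (isLRMax_zero _)
    · rw [isLRMax_jump h0, isLRMax_jump h0, h _ i.isLt, h (i.val - 1) (by omega)]
  have hA : ∀ i, IsLRMax σ i → σ i = τ i := by
    intro i hi
    have h1 := isLRMax_iff.mp hi
    have h2 := isLRMax_iff.mp ((hLR i).mp hi)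
    rw [h _ i.isLt] at h1
    exact Fin.ext (by omega)
  have hmono : ∀ (ρ : Equiv.Perm (Fin n)), Avoids321 ρ →
      ∀ i ∈ univ.filter (fun i => ¬ IsLRMax ρ i), ∀ j ∈ univ.filter (fun i => ¬ IsLRMax ρ i),
      i < j → ρ i < ρ j := by
    intro ρ hρ i hi j hj hij
    rw [Finset.mem_filter] at hi hj
    by_contra hle
    push_neg at hle
    have hne : ρ j ≠ ρ i := fun he => (ne_of_lt hij) (ρ.injective he).symm
    have hji : ρ j < ρ i := lt_of_le_of_ne hle hne
    have hi2 := hi.2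
    rw [IsLRMax] at hi2
    push_neg at hi2
    obtain ⟨i', hi'le, hlt⟩ := hi2
    have hi'lt : i' < i := lt_of_le_of_ne hi'le
      (fun he => by rw [he] at hlt; exact absurd hlt (lt_irrefl _))
    exact hρ ⟨i', i, j, hi'lt, hij, hji, hlt⟩
  have hBeq : univ.filter (fun i => ¬ IsLRMax τ i) = univ.filter (fun i => ¬ IsLRMax σ i) := by
    ext i; simp only [Finset.mem_filter, Finset.mem_univ, true_and]
    rw [hLR i]
  have hU : ∀ (ρ : Equiv.Perm (Fin n)),
      (univ.filter (fun i => ¬ IsLRMax σ i)).image ρ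
        = univ \ ((univ.filter (fun i => IsLRMax σ i)).image ρ) := by
    intro ρ
    ext v
    simp only [Finset.mem_image, Finset.mem_sdiff, Finset.mem_univ, true_and,
      Finset.mem_filter]
    constructor
    · rintro ⟨i, hi, rfl⟩
      rintro ⟨i', hi', he⟩
      exact hi (ρ.injective he ▸ hi')
    · intro hv
      refine ⟨ρ.symm v, ?_, by simp⟩
      intro hlr
      exact hv ⟨ρ.symm v, hlr, by simp⟩
  have him : (univ.filter (fun i => ¬ IsLRMax σ i)).image σ
      = (univ.filter (fun i => ¬ IsLRMax σ i)).image τ := by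
    rw [hU σ, hU τ]
    congr 1
    apply Finset.image_congr
    intro x hx
    exact hA x (Finset.mem_filter.mp hx).2
  have hmτ : ∀ i ∈ univ.filter (fun i => ¬ IsLRMax σ i),
      ∀ j ∈ univ.filter (fun i => ¬ IsLRMax σ i), i < j → τ i < τ j := by
    intro i hi j hj hij
    rw [← hBeq] at hi hj
    exact hmono τ hτ i hi j hj hij
  have hB := monoOn_image_eq (hmono σ hσ) hmτ him
  apply Equiv.ext
  intro i
  by_cases hi : IsLRMax σ i
  · exact hA i hi
  · exact hB i (Finset.mem_filter.mpr ⟨Finset.mem_univ _, hi⟩)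
section Construct

lemma pm_zero {σ : Equiv.Perm (Fin n)} (h0 : 0 < n) :
    pm σ 0 = (σ ⟨0, h0⟩).val + 1 := by
  have : (univ.filter (fun j : Fin n => j.val ≤ 0)) = {(⟨0, h0⟩ : Fin n)} := by
    ext j
    simp only [Finset.mem_filter, Finset.mem_univ, true_and, Finset.mem_singleton,
      Fin.ext_iff]
    omega
  rw [pm, this, Finset.sup_singleton]

lemma rank_orderIsoOfFin {s : Finset (Fin n)} {k : ℕ} (e : Fin k ≃o {x // x ∈ s}) (r : Fin k) :
    (s.filter (fun z => z < (e r : Fin n))).card = r.val := by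
  have h1 : (univ.filter (fun t : Fin k => t < r)).card = r.val := by
    have he : (univ.filter (fun t : Fin k => t < r))
        = (univ.filter (fun t : Fin k => t.val < r.val)) := by
      ext t; simp only [Finset.mem_filter, Fin.lt_def]
    rw [he, card_filter_lt]
    have := r.isLt; omega
  rw [← h1]
  symm
  apply Finset.card_bij (fun t _ => (e t : Fin n))
  · intro t ht
    rw [Finset.mem_filter] at ht ⊢
    refine ⟨(e t).2, ?_⟩
    exact Subtype.coe_lt_coe.mpr (e.lt_iff_lt.mpr ht.2)
  · intro t₁ h₁ t₂ h₂ he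
    exact e.injective (Subtype.coe_injective he)
  · intro z hz
    rw [Finset.mem_filter] at hz
    refine ⟨e.symm ⟨z, hz.1⟩, ?_, by simp⟩
    rw [Finset.mem_filter]
    refine ⟨Finset.mem_univ _, ?_⟩
    have hlt : (⟨z, hz.1⟩ : {x // x ∈ s}) < e r := Subtype.coe_lt_coe.mp hz.2
    have h2 : e (e.symm ⟨z, hz.1⟩) < e r := by rw [e.apply_symm_apply]; exact hlt
    exact e.lt_iff_lt.mp h2

lemma rank_lt_of_card {s : Finset (Fin n)} {k : ℕ} (e : Fin k ≃o {x // x ∈ s}) (r : Fin k)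
    {t : ℕ} (h : r.val < (s.filter (fun z => z.val < t)).card) : (e r : Fin n).val < t := by
  by_contra hc
  push_neg at hc
  have hsub : s.filter (fun z => z.val < t) ⊆ s.filter (fun z => z < (e r : Fin n)) := by
    intro z hz
    rw [Finset.mem_filter] at hz ⊢
    exact ⟨hz.1, Fin.lt_def.mpr (by omega)⟩
  have hle := Finset.card_le_card hsub
  rw [rank_orderIsoOfFin e r] at hle
  omega

end Construct
lemma exists_perm (m : ℕ → ℕ)
    (hmono : ∀ d e, d ≤ e → e < n → m d ≤ m e)
    (hlb : ∀ d, d < n → d + 1 ≤ m d)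
    (hub : ∀ d, d < n → m d ≤ n) :
    ∃ σ : Equiv.Perm (Fin n), Avoids321 σ ∧ ∀ d, d < n → pm σ d = m d := by
  classical
  set A : Finset (Fin n) :=
    univ.filter (fun d : Fin n => d.val = 0 ∨ m (d.val - 1) < m d.val) with hA
  have memA : ∀ d : Fin n, d ∈ A ↔ (d.val = 0 ∨ m (d.val - 1) < m d.val) := by
    intro d; simp [hA]
  set fA : Fin n → Fin n := fun d => ⟨m d.val - 1, by
    have h1 := hub d.val d.isLt; have h2 := hlb d.val d.isLt; omega⟩ with hfA
  have fA_val : ∀ d : Fin n, (fA d).val = m d.val - 1 := fun d => rfl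
  have hfAmono : ∀ d ∈ A, ∀ e ∈ A, d < e → fA d < fA e := by
    intro d hd e he hde
    rw [memA] at he
    have hde' : d.val < e.val := Fin.lt_def.mp hde
    have h1 : m d.val ≤ m (e.val - 1) := hmono _ _ (by omega) (by have := e.isLt; omega)
    have h2 : m (e.val - 1) < m e.val := by
      rcases he with h | h
      · omega
      · exact h
    have h3 := hlb d.val d.isLt
    rw [Fin.lt_def, fA_val, fA_val]
    omega
  set V : Finset (Fin n) := A.image fA with hV
  have hfAinj : Set.InjOn fA A := by
    intro x hx y hy hxy
    by_contra hne
    rcases lt_or_gt_of_ne hne with hlt | hlt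
    · exact absurd hxy (ne_of_lt (hfAmono x hx y hy hlt))
    · exact absurd hxy.symm (ne_of_lt (hfAmono y hy x hx hlt))
  have hcardV : V.card = A.card := Finset.card_image_of_injOn hfAinj
  set Bc : Finset (Fin n) := univ \ A with hBc
  set Vc : Finset (Fin n) := univ \ V with hVc
  have hcardVc : Vc.card = Bc.card := by
    rw [hVc, hBc, Finset.card_sdiff_of_subset (Finset.subset_univ _),
      Finset.card_sdiff_of_subset (Finset.subset_univ _), hcardV]
  set eB := Bc.orderIsoOfFin (rfl : Bc.card = Bc.card) with heB
  set eV := Vc.orderIsoOfFin hcardVc with heV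
  set f : Fin n → Fin n := fun i =>
    if hi : i ∈ A then fA i
    else (eV (eB.symm ⟨i, Finset.mem_sdiff.mpr ⟨Finset.mem_univ _, hi⟩⟩) : Fin n) with hf
  have hf_A : ∀ i (hi : i ∈ A), f i = fA i := by
    intro i hi; rw [hf]; simp [hi]
  have hf_B : ∀ i (hi : i ∉ A),
      f i = (eV (eB.symm ⟨i, Finset.mem_sdiff.mpr ⟨Finset.mem_univ _, hi⟩⟩) : Fin n) := by
    intro i hi; rw [hf]; simp [hi]
  have hf_B_mem : ∀ i (hi : i ∉ A), f i ∈ Vc := by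
    intro i hi; rw [hf_B i hi]; exact (eV _).2
  -- key bound : for i ∉ A, (f i).val < m i.val
  have hF0 : ∀ i (hi : i ∉ A), (f i).val < m i.val := by
    intro j hj
    rw [hf_B j hj]
    apply rank_lt_of_card
    -- compute the rank of j in Bc
    set r := eB.symm ⟨j, Finset.mem_sdiff.mpr ⟨Finset.mem_univ _, hj⟩⟩ with hr
    have hrval : (Bc.filter (fun z => z < j)).card = r.val := by
      have := rank_orderIsoOfFin eB r
      rw [hr] at this ⊢
      rw [← this]
      congr 2
      rw [OrderIso.apply_symm_apply]
    -- count V below m j.val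
    set cA := (A.filter (fun a => a < j)).card with hcA
    have hVcount : (V.filter (fun v => v.val < m j.val)).card = cA := by
      rw [hcA]
      symm
      apply Finset.card_bij (fun a _ => fA a)
      · intro a ha
        rw [Finset.mem_filter] at ha ⊢
        refine ⟨Finset.mem_image_of_mem _ ha.1, ?_⟩
        rw [fA_val]
        have h1 : m a.val ≤ m j.val := hmono _ _ (le_of_lt (Fin.lt_def.mp ha.2)) j.isLt
        have h2 := hlb j.val j.isLt
        omega
      · intro a₁ h₁ a₂ h₂ he
        rw [Finset.mem_filter] at h₁ h₂
        exact hfAinj h₁.1 h₂.1 he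
      · intro v hv
        rw [Finset.mem_filter] at hv
        obtain ⟨hvV, hvlt⟩ := hv
        rw [hV, Finset.mem_image] at hvV
        obtain ⟨a, ha, rfl⟩ := hvV
        refine ⟨a, ?_, rfl⟩
        rw [Finset.mem_filter]
        refine ⟨ha, ?_⟩
        rw [Fin.lt_def]
        by_contra hc
        push_neg at hc
        have hne : a.val ≠ j.val := fun he => hj (by
          have : a = j := Fin.ext he
          rw [← this]; exact ha)
        have hjlt : j.val < a.val := by omega
        rw [memA] at ha
        have h1 : m j.val ≤ m (a.val - 1) := hmono _ _ (by omega) (by have := a.isLt; omega)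
        have h2 : m (a.val - 1) < m a.val := by
          rcases ha with h | h
          · omega
          · exact h
        rw [fA_val] at hvlt
        omega
    -- count all below m j.val, split over V
    have htot : (univ.filter (fun v : Fin n => v.val < m j.val)).card = m j.val := by
      rw [card_filter_lt]
      have := hub j.val j.isLt
      omega
    have hsplit := Finset.card_filter_add_card_filter_not
      (s := univ.filter (fun v : Fin n => v.val < m j.val)) (p := fun v => v ∈ V)
    have he1 : (univ.filter (fun v : Fin n => v.val < m j.val)).filter (fun v => v ∈ V)
        = V.filter (fun v => v.val < m j.val) := by
      ext v
      simp only [Finset.mem_filter, Finset.mem_univ, true_and]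
      tauto
    have he2 : (univ.filter (fun v : Fin n => v.val < m j.val)).filter (fun v => ¬ v ∈ V)
        = Vc.filter (fun v => v.val < m j.val) := by
      ext v
      simp only [Finset.mem_filter, Finset.mem_univ, true_and, hVc, Finset.mem_sdiff]
      tauto
    rw [he1, he2, hVcount, htot] at hsplit
    -- relate r and j
    have hjsplit := Finset.card_filter_add_card_filter_not
      (s := univ.filter (fun z : Fin n => z < j)) (p := fun z => z ∈ A)
    have he3 : (univ.filter (fun z : Fin n => z < j)).filter (fun z => z ∈ A)
        = A.filter (fun z => z < j) := by
      ext z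
      simp only [Finset.mem_filter, Finset.mem_univ, true_and]
      tauto
    have he4 : (univ.filter (fun z : Fin n => z < j)).filter (fun z => ¬ z ∈ A)
        = Bc.filter (fun z => z < j) := by
      ext z
      simp only [Finset.mem_filter, Finset.mem_univ, true_and, hBc, Finset.mem_sdiff]
      tauto
    have he5 : (univ.filter (fun z : Fin n => z < j)).card = j.val := by
      have : (univ.filter (fun z : Fin n => z < j))
          = (univ.filter (fun z : Fin n => z.val < j.val)) := by
        ext z; simp only [Finset.mem_filter, Fin.lt_def]
      rw [this, card_filter_lt]
      have := j.isLt; omega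
    rw [he3, he4, he5, hrval, ← hcA] at hjsplit
    have hlbj := hlb j.val j.isLt
    omega
  -- (F1') : i ∈ A, j < i implies f j < f i
  have hF1 : ∀ i ∈ A, ∀ j : Fin n, j < i → f j < f i := by
    intro i hi j hji
    by_cases hjA : j ∈ A
    · rw [hf_A i hi, hf_A j hjA]
      exact hfAmono j hjA i hi hji
    · rw [hf_A i hi, Fin.lt_def, fA_val]
      have h1 := hF0 j hjA
      have hji' := Fin.lt_def.mp hji
      have hipos : 0 < i.val := by omega
      rw [memA] at hi
      have h2 : m (i.val - 1) < m i.val := by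
        rcases hi with h | h
        · omega
        · exact h
      have h3 : m j.val ≤ m (i.val - 1) := hmono _ _ (by omega) (by have := i.isLt; omega)
      omega
  -- (F2) : both outside A, strict mono
  have hF2 : ∀ i (hi : i ∉ A), ∀ j (hj : j ∉ A), j < i → f j < f i := by
    intro i hi j hj hji
    rw [hf_B i hi, hf_B j hj]
    have hsub : (⟨j, Finset.mem_sdiff.mpr ⟨Finset.mem_univ _, hj⟩⟩ : {x // x ∈ Bc})
        < ⟨i, Finset.mem_sdiff.mpr ⟨Finset.mem_univ _, hi⟩⟩ := Subtype.mk_lt_mk.mpr hji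
    have h1 : eB.symm ⟨j, _⟩ < eB.symm ⟨i, _⟩ := eB.symm.lt_iff_lt.mpr hsub
    exact Subtype.coe_lt_coe.mpr (eV.lt_iff_lt.mpr h1)
  -- injectivity
  have hinj : Function.Injective f := by
    have key : ∀ x y : Fin n, x < y → f x ≠ f y := by
      intro x y hlt
      by_cases hyA : y ∈ A
      · exact ne_of_lt (hF1 y hyA x hlt)
      · by_cases hxA : x ∈ A
        · intro hxy
          have h1 : f x ∈ V := by rw [hf_A x hxA]; exact Finset.mem_image_of_mem _ hxA
          have h2 := hf_B_mem y hyA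
          rw [hVc, Finset.mem_sdiff] at h2
          exact h2.2 (hxy ▸ h1)
        · exact ne_of_lt (hF2 y hyA x hxA hlt)
    intro x y hxy
    by_contra hne
    rcases lt_or_gt_of_ne hne with h | h
    · exact key x y h hxy
    · exact key y x h hxy.symm
  have hbij : Function.Bijective f := Finite.injective_iff_bijective.mp hinj
  refine ⟨Equiv.ofBijective f hbij, ?_, ?_⟩
  · -- 321-avoiding
    rintro ⟨i, j, k, hij, hjk, h1, h2⟩
    simp only [Equiv.ofBijective_apply] at h1 h2
    have hjA : j ∉ A := fun hA' => absurd (hF1 j hA' i hij) (not_lt.mpr (le_of_lt h2))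
    have hkA : k ∉ A := fun hA' => absurd (hF1 k hA' j hjk) (not_lt.mpr (le_of_lt h1))
    exact absurd (hF2 k hkA j hjA hjk) (not_lt.mpr (le_of_lt h1))
  · -- prefix maxima
    intro d hd
    induction d with
    | zero =>
      rw [pm_zero (by omega)]
      have h0A : (⟨0, by omega⟩ : Fin n) ∈ A := by rw [memA]; left; rfl
      have : (Equiv.ofBijective f hbij) ⟨0, by omega⟩ = fA ⟨0, by omega⟩ := hf_A _ h0A
      rw [this]
      have hv : (fA (⟨0, by omega⟩ : Fin n)).val = m 0 - 1 := rfl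
      rw [hv]
      have := hlb 0 (by omega)
      omega
    | succ d ih =>
      have hdn : d < n := by omega
      have hpm := pm_succ (Equiv.ofBijective f hbij) (d := d) hd
      rw [hpm, ih hdn]
      have happ : (Equiv.ofBijective f hbij) ⟨d + 1, hd⟩ = f ⟨d + 1, hd⟩ := rfl
      by_cases hA' : (⟨d + 1, hd⟩ : Fin n) ∈ A
      · rw [happ, hf_A _ hA', fA_val]
        simp only
        have hjump : m d < m (d + 1) := by
          have := (memA _).mp hA'
          rcases this with h | h
          · simp at h
          · simpa using h
        have := hlb (d + 1) hd
        omega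
      · have hflt := hF0 _ hA'
        rw [happ]
        have hmeq : m (d + 1) = m d := by
          have h1 : ¬ (m d < m (d + 1)) := by
            intro hc
            exact hA' ((memA _).mpr (Or.inr (by simpa using hc)))
          have h2 : m d ≤ m (d + 1) := hmono _ _ (by omega) hd
          omega
        simp only at hflt
        omega
section Surj

variable {M : ℕ}

lemma downCt_le (P : Fin M → Bool) (i : ℕ) : DownCt P i ≤ i := by
  have h : univ.filter (fun j : Fin M => j.val < i ∧ P j = false)
      ⊆ univ.filter (fun j : Fin M => j.val < i) := by
    intro j hj
    rw [Finset.mem_filter] at hj ⊢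
    exact ⟨hj.1, hj.2.1⟩
  have h2 := Finset.card_le_card h
  rw [card_filter_lt] at h2
  rw [DownCt]
  omega

lemma downCt_succ_false {P : Fin M → Bool} {i : ℕ} (h : i < M) (hf : P ⟨i, h⟩ = false) :
    DownCt P (i + 1) = DownCt P i + 1 := by
  rw [DownCt, DownCt]
  have hset : univ.filter (fun j : Fin M => j.val < i + 1 ∧ P j = false)
      = insert (⟨i, h⟩ : Fin M) (univ.filter (fun j : Fin M => j.val < i ∧ P j = false)) := by
    ext j
    simp only [Finset.mem_filter, Finset.mem_univ, true_and, Finset.mem_insert]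
    constructor
    · rintro ⟨h1, h2⟩
      rcases Nat.lt_or_ge j.val i with h3 | h3
      · exact Or.inr ⟨h3, h2⟩
      · left
        exact Fin.ext (by show j.val = i; omega)
    · rintro (h1 | ⟨h1, h2⟩)
      · subst h1
        exact ⟨Nat.lt_succ_self i, hf⟩
      · exact ⟨by omega, h2⟩
  rw [hset, Finset.card_insert_of_notMem (by
    rw [Finset.mem_filter]
    rintro ⟨-, h1, -⟩
    simp at h1)]

lemma downCt_succ_le (P : Fin M → Bool) (i : ℕ) : DownCt P (i + 1) ≤ DownCt P i + 1 := by
  by_cases h : i < M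
  · rcases Bool.eq_false_or_eq_true (P ⟨i, h⟩) with ht | hf
    · -- P ⟨i,h⟩ = true
      have he : DownCt P (i + 1) = DownCt P i := by
        rw [DownCt, DownCt]
        congr 1
        ext j
        simp only [Finset.mem_filter, Finset.mem_univ, true_and]
        constructor
        · rintro ⟨h1, h2⟩
          refine ⟨?_, h2⟩
          rcases Nat.lt_or_ge j.val i with h3 | h3
          · exact h3
          · have hj : j = ⟨i, h⟩ := Fin.ext (by show j.val = i; omega)
            rw [hj, ht] at h2
            exact absurd h2 (by simp)
        · rintro ⟨h1, h2⟩
          exact ⟨by omega, h2⟩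
      omega
    · rw [downCt_succ_false h hf]
  · have he : DownCt P (i + 1) = DownCt P i := by
      rw [DownCt, DownCt]
      congr 1
      ext j
      have := j.isLt
      simp only [Finset.mem_filter, Finset.mem_univ, true_and]
      constructor
      · rintro ⟨h1, h2⟩
        exact ⟨by omega, h2⟩
      · rintro ⟨h1, h2⟩
        exact ⟨by omega, h2⟩
    omega

lemma downCt_lipschitz (P : Fin M → Bool) (a t : ℕ) :
    DownCt P (a + t) ≤ DownCt P a + t := by
  induction t with
  | zero => simp
  | succ t ih =>
    have h := downCt_succ_le P (a + t)
    have he : a + (t + 1) = a + t + 1 := by omega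
    rw [he]
    omega

lemma downCt_total {P : Fin (2 * n) → Bool} (hP : IsDyck P) : DownCt P (2 * n) = n := by
  have h1 := upCt_add_downCt P (2 * n)
  have h2 := hP.2
  omega

lemma downCt_strict {P : Fin M → Bool} {a b : Fin M} (haf : P a = false) (hlt : a < b) :
    DownCt P a.val < DownCt P b.val := by
  have g1 : DownCt P (a.val + 1) = DownCt P a.val + 1 := downCt_succ_false a.isLt haf
  have g2 : DownCt P (a.val + 1) ≤ DownCt P b.val := downCt_mono P (Fin.lt_def.mp hlt)
  omega

lemma exists_posD {P : Fin (2 * n) → Bool} (hP : IsDyck P) {d : ℕ} (hd : d < n) :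
    ∃ j : Fin (2 * n), P j = false ∧ DownCt P j.val = d := by
  classical
  set Ds := univ.filter (fun j : Fin (2 * n) => P j = false) with hDs
  have hDscard : Ds.card = n := by
    have h1 := downCt_total hP
    rw [DownCt] at h1
    have he : univ.filter (fun j : Fin (2 * n) => j.val < 2 * n ∧ P j = false) = Ds := by
      ext j
      have := j.isLt
      simp only [hDs, Finset.mem_filter, Finset.mem_univ, true_and]
      tauto
    rw [he] at h1
    exact h1
  have hmem : ∀ j ∈ Ds, DownCt P j.val ∈ Finset.range n := by
    intro j hj
    rw [hDs, Finset.mem_filter] at hj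
    rw [Finset.mem_range]
    have h1 : DownCt P (j.val + 1) = DownCt P j.val + 1 := downCt_succ_false j.isLt hj.2
    have h2 : DownCt P (j.val + 1) ≤ DownCt P (2 * n) := downCt_mono P j.isLt
    rw [downCt_total hP] at h2
    omega
  have hinjOn : Set.InjOn (fun j : Fin (2 * n) => DownCt P j.val) Ds := by
    intro x hx y hy hxy
    simp only [hDs, Finset.coe_filter, Set.mem_setOf_eq] at hx hy
    by_contra hne
    rcases lt_or_gt_of_ne hne with h | h
    · exact absurd hxy (ne_of_lt (downCt_strict hx.2 h))
    · exact absurd hxy.symm (ne_of_lt (downCt_strict hy.2 h))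
  have himage : Ds.image (fun j => DownCt P j.val) = Finset.range n := by
    apply Finset.eq_of_subset_of_card_le
    · intro v hv
      rw [Finset.mem_image] at hv
      obtain ⟨j, hj, rfl⟩ := hv
      exact hmem j hj
    · rw [Finset.card_image_of_injOn hinjOn, hDscard, Finset.card_range]
  have hdmem : d ∈ Ds.image (fun j => DownCt P j.val) := by
    rw [himage, Finset.mem_range]
    exact hd
  rw [Finset.mem_image] at hdmem
  obtain ⟨j, hj, hje⟩ := hdmem
  rw [hDs, Finset.mem_filter] at hj
  exact ⟨j, hj.2, hje⟩

lemma gam_surjective {P : Fin (2 * n) → Bool} (hP : IsDyck P) :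
    ∃ σ : Equiv.Perm (Fin n), Avoids321 σ ∧ Gam σ = P := by
  classical
  have hpos : ∀ d : ℕ, d < n → ∃ j : Fin (2 * n), P j = false ∧ DownCt P j.val = d :=
    fun d hd => exists_posD hP hd
  set posF : ∀ d : ℕ, d < n → Fin (2 * n) := fun d hd => Classical.choose (hpos d hd)
    with hposF
  have hposP : ∀ d (hd : d < n), P (posF d hd) = false ∧ DownCt P ((posF d hd).val) = d :=
    fun d hd => Classical.choose_spec (hpos d hd)
  set pos : ℕ → ℕ := fun d => if h : d < n then (posF d h).val else 0 with hposdef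
  have hposval : ∀ d (h : d < n), pos d = (posF d h).val := by
    intro d h
    rw [hposdef]
    simp [h]
  have hposlt : ∀ d, d < n → pos d < 2 * n := by
    intro d h
    rw [hposval d h]
    exact (posF d h).isLt
  have hposuniq : ∀ (j : Fin (2 * n)), P j = false → ∀ d (hd : d < n),
      DownCt P j.val = d → j.val = pos d := by
    intro j hjf d hdn hje
    rw [hposval d hdn]
    have h1 := (hposP d hdn).1
    have h2 := (hposP d hdn).2
    by_contra hne
    have hne' : j ≠ posF d hdn := fun he => hne (by rw [he])
    rcases lt_or_gt_of_ne hne' with h | h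
    · have := downCt_strict hjf h
      omega
    · have := downCt_strict h1 h
      omega
  set m : ℕ → ℕ := fun d => pos d - d with hm
  have hmval : ∀ d, m d = pos d - d := fun d => rfl
  have hdle : ∀ d, d < n → d ≤ pos d := by
    intro d h
    have h1 := (hposP d h).2
    have h2 := downCt_le P (pos d)
    rw [← hposval d h] at h1
    omega
  have hDCpos : ∀ d (h : d < n), DownCt P (pos d) = d := by
    intro d h
    rw [hposval d h]
    exact (hposP d h).2
  have hDCpos1 : ∀ d (h : d < n), DownCt P (pos d + 1) = d + 1 := by
    intro d h
    rw [hposval d h]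
    rw [downCt_succ_false (posF d h).isLt (hposP d h).1]
    rw [(hposP d h).2]
  have hub : ∀ d, d < n → m d ≤ n := by
    intro d h
    have h1 := hDCpos1 d h
    have h2 := upCt_add_downCt P (pos d + 1)
    have h3 : UpCt P (pos d + 1) ≤ UpCt P (2 * n) := upCt_mono P (hposlt d h)
    have h4 := upCt_add_downCt P (2 * n)
    have h5 := downCt_total hP
    have h6 := hposlt d h
    rw [hmval]
    omega
  have hlb : ∀ d, d < n → d + 1 ≤ m d := by
    intro d h
    have h1 := hDCpos1 d h
    have h2 := upCt_add_downCt P (pos d + 1)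
    have h3 := hP.1 (pos d + 1) (by have := hposlt d h; omega)
    have h6 := hposlt d h
    rw [hmval]
    omega
  have hmono : ∀ d e, d ≤ e → e < n → m d ≤ m e := by
    intro d e hde hen
    rcases Nat.eq_or_lt_of_le hde with rfl | hlt
    · exact le_refl _
    · have hdn : d < n := by omega
      have hd1 := hDCpos d hdn
      have he1 := hDCpos e hen
      have hlt2 : pos d < pos e := by
        by_contra hc
        push_neg at hc
        have := downCt_mono P hc
        omega
      have hsf := hDCpos1 d hdn
      have hlip := downCt_lipschitz P (pos d + 1) (pos e - pos d - 1)
      have heq : pos d + 1 + (pos e - pos d - 1) = pos e := by omega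
      rw [heq] at hlip
      have g1 := hdle d hdn
      have g2 := hdle e hen
      rw [hmval, hmval]
      omega
  obtain ⟨σ, hσav, hσpm⟩ := exists_perm m hmono hlb hub
  refine ⟨σ, hσav, ?_⟩
  funext p
  rcases Bool.eq_false_or_eq_true (P p) with hPp | hPp
  · -- P p = true
    rw [hPp]
    apply gam_eq_true_iff.mpr
    intro d hd hpe
    have e1 : Dp σ d = pm σ d + d := rfl
    rw [e1, hσpm d hd, hmval] at hpe
    have hdp := hdle d hd
    have h2 : p.val = pos d := by omega
    have hp2 : p = ⟨pos d, hposlt d hd⟩ := Fin.ext h2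
    have h3 := (hposP d hd).1
    have hp3 : (⟨pos d, hposlt d hd⟩ : Fin (2 * n)) = posF d hd :=
      Fin.ext (hposval d hd)
    rw [hp2, hp3, h3] at hPp
    exact Bool.noConfusion hPp
  · -- P p = false
    rw [hPp]
    have hd : DownCt P p.val < n := by
      have h1 : DownCt P (p.val + 1) = DownCt P p.val + 1 := downCt_succ_false p.isLt hPp
      have h2 : DownCt P (p.val + 1) ≤ DownCt P (2 * n) :=
        downCt_mono P (by have := p.isLt; omega)
      rw [downCt_total hP] at h2
      omega
    have hpu := hposuniq p hPp _ hd rfl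
    apply gam_eq_false_iff.mpr
    refine ⟨DownCt P p.val, hd, ?_⟩
    have e1 : Dp σ (DownCt P p.val) = pm σ (DownCt P p.val) + DownCt P p.val := rfl
    rw [e1, hσpm _ hd, hmval]
    have hdp := hdle _ hd
    omega

end Surj
end Stmt5Aux

/-- there is a bijection Γ from `Av_n(321)` to Dyck paths of semilength `n`
with `lrm π = npea Γ(π)` and `inv π = spea Γ(π)`. -/
theorem stmt5 (n : ℕ) (hn : 1 ≤ n) :
    ∃ Γ : {σ : Equiv.Perm (Fin n) // σ ∈ Av n} → {P : Fin (2 * n) → Bool // P ∈ DyckSet n},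
      Function.Bijective Γ ∧
        ∀ π : {σ : Equiv.Perm (Fin n) // σ ∈ Av n},
          lrm π.1 = npea (Γ π).1 ∧ invPerm π.1 = spea (Γ π).1 := by
  classical
  have hav : ∀ π : {σ : Equiv.Perm (Fin n) // σ ∈ Av n}, Avoids321 π.1 := by
    intro π
    have h := π.2
    simp only [Av, Finset.mem_filter] at h
    exact h.2
  refine ⟨fun π => ⟨Stmt5Aux.Gam π.1, by
    simp only [DyckSet, Finset.mem_filter]
    exact ⟨Finset.mem_univ _, Stmt5Aux.isDyck_gam π.1⟩⟩, ⟨?_, ?_⟩, ?_⟩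
  · intro π₁ π₂ h
    apply Subtype.ext
    have h2 : Stmt5Aux.Gam π₁.1 = Stmt5Aux.Gam π₂.1 := congrArg Subtype.val h
    exact Stmt5Aux.pm_inj (hav π₁) (hav π₂) (Stmt5Aux.gam_pm_eq h2)
  · rintro ⟨P, hP⟩
    simp only [DyckSet, Finset.mem_filter] at hP
    obtain ⟨σ, havσ, hG⟩ := Stmt5Aux.gam_surjective hP.2
    exact ⟨⟨σ, by simp only [Av, Finset.mem_filter]; exact ⟨Finset.mem_univ _, havσ⟩⟩,
      Subtype.ext hG⟩
  · intro π
    constructor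
    · exact (Stmt5Aux.npea_gam π.1).symm
    · rw [Stmt5Aux.inv_eq (hav π), Stmt5Aux.spea_gam]
end

section
/- For every integer n ≥ 0, P_{n+1}(q,t) = q^n · t · Σ_{P∈D_n} q^{α(P)−β(P)} t^{des P}, as an identity in ℤ[q,t] (note α(P) ≥ β(P) for every Dyck path P, so the right-hand side is a polynomial); i.e., P_{n+1}(q,t) = q^n t C_n(q,q^{-1};t). -/
open Finset MvPolynomial

/-!
Send a Dyck path `P` of semilength `n` to the pair of paths of length `n + 1` whose east steps
sit at the heights of the peaks of `P` (upper path), respectively at `0` and at the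
`x`-coordinates of the valleys of `P` (lower path). The last peak has height `n` and the other
peak heights are exactly the valley heights, so both paths have `des P + 1` east steps, and since
`x ≤ y` at every valley the upper path stays strictly above the lower one. An east step at
position `s` preceded by `r` east steps lies at height `s - r`; as both paths have equally many
east steps, the area is the sum of the peak heights, `n + α(P)`, minus the sum of the valley
`x`-coordinates, `β(P)`. The map is injective because each letter of `P` can be read off from its
prefix and the two paths, and it is onto by counting: interleaving the two boundary paths of a
polyomino is an injection back into Dyck paths.
-/

section PrefixCounts

variable {m : ℕ}

lemma UpCt_succ (P : Fin m → Bool) {i : ℕ} (h : i < m) :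
    UpCt P (i + 1) = UpCt P i + if P ⟨i, h⟩ = true then 1 else 0 := by
  have hsplit : (fun j : Fin m => if j.val < i + 1 ∧ P j = true then 1 else 0) =
      fun j => (if j.val < i ∧ P j = true then 1 else 0) +
        if j = ⟨i, h⟩ then (if P j = true then 1 else 0) else 0 := by
    funext j
    rcases lt_trichotomy j.val i with hj | hj | hj
    · simp [hj, Nat.lt_succ_of_lt hj, Fin.ext_iff, hj.ne]
    · simp [show j = ⟨i, h⟩ from Fin.ext hj]
    · simp [not_lt.2 hj.le, show ¬ j.val < i + 1 by omega, Fin.ext_iff, hj.ne']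
  simp only [UpCt, card_filter, hsplit, sum_add_distrib, sum_ite_eq', mem_univ, if_true]

lemma UpCt_zero (P : Fin m → Bool) : UpCt P 0 = 0 := by
  simp [UpCt]

lemma UpCt_mono (P : Fin m → Bool) {i i' : ℕ} (h : i ≤ i') : UpCt P i ≤ UpCt P i' :=
  card_le_card fun j hj => by
    simp only [mem_filter, mem_univ, true_and] at hj ⊢
    exact ⟨by omega, hj.2⟩

lemma UpCt_le_UpCt_length (P : Fin m → Bool) (i : ℕ) : UpCt P i ≤ UpCt P m :=
  card_le_card fun j hj => by
    simp only [mem_filter, mem_univ, true_and] at hj ⊢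
    exact ⟨j.isLt, hj.2⟩

lemma UpCt_congr {P Q : Fin m → Bool} {i : ℕ} (h : ∀ j : Fin m, j.val < i → P j = Q j) :
    UpCt P i = UpCt Q i :=
  congrArg card <| filter_congr fun j _ => and_congr_right fun hj => by rw [h j hj]

lemma DownCt_eq_UpCt_not (P : Fin m → Bool) (i : ℕ) :
    DownCt P i = UpCt (fun j => !P j) i := by
  simp [DownCt, UpCt]

lemma UpCt_add_DownCt (P : Fin m → Bool) {i : ℕ} (h : i ≤ m) : UpCt P i + DownCt P i = i := by
  induction i with
  | zero => simp [DownCt_eq_UpCt_not, UpCt_zero]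
  | succ k ih =>
    rw [DownCt_eq_UpCt_not] at ih ⊢
    rw [UpCt_succ _ h, UpCt_succ _ h]
    cases P ⟨k, h⟩ <;> simp <;> omega

lemma UpCt_eq_of_forall_eq_false {P : Fin m → Bool} {a b : ℕ} (hab : a ≤ b)
    (h : ∀ j : Fin m, a ≤ j.val → j.val < b → P j = false) : UpCt P b = UpCt P a := by
  refine congrArg card <| filter_congr fun j _ => ?_
  by_cases hj : a ≤ j.val ∧ j.val < b
  · simp [h j hj.1 hj.2]
  · constructor <;> rintro ⟨hjb, hPj⟩ <;> exact ⟨by omega, hPj⟩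

lemma exists_eq_true_of_UpCt_lt {P : Fin m → Bool} {a b : ℕ} (h : UpCt P a < UpCt P b) :
    ∃ j : Fin m, a ≤ j.val ∧ j.val < b ∧ P j = true := by
  by_contra! hP
  have hab : a ≤ b := by
    by_contra! hba
    exact absurd (UpCt_mono P hba.le) (not_le.2 h)
  have := UpCt_eq_of_forall_eq_false hab fun j ha hb => by simpa using hP j ha hb
  omega

lemma UpCt_lt_of_eq_true {P : Fin m → Bool} {j : Fin m} (hj : P j = true) {a b : ℕ}
    (ha : a ≤ j.val) (hb : j.val < b) : UpCt P a < UpCt P b := by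
  have hsucc := UpCt_succ P j.isLt
  simp only [Fin.eta, hj, if_true] at hsucc
  have := UpCt_mono P ha
  have := UpCt_mono P (show j.val + 1 ≤ b from hb)
  omega

lemma DownCt_lt_of_eq_false {P : Fin m → Bool} {j : Fin m} (hj : P j = false) {a b : ℕ}
    (ha : a ≤ j.val) (hb : j.val < b) : DownCt P a < DownCt P b := by
  rw [DownCt_eq_UpCt_not, DownCt_eq_UpCt_not]
  exact UpCt_lt_of_eq_true (by simp [hj]) ha hb

lemma DownCt_mono (P : Fin m → Bool) {i i' : ℕ} (h : i ≤ i') :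
    DownCt P i ≤ DownCt P i' := by
  rw [DownCt_eq_UpCt_not, DownCt_eq_UpCt_not]
  exact UpCt_mono _ h

lemma DownCt_congr {P Q : Fin m → Bool} {i : ℕ} (h : ∀ j : Fin m, j.val < i → P j = Q j) :
    DownCt P i = DownCt Q i := by
  rw [DownCt_eq_UpCt_not, DownCt_eq_UpCt_not]
  exact UpCt_congr fun j hj => by rw [h j hj]

end PrefixCounts

section PeaksValleys

variable {m : ℕ} {P : Fin m → Bool}

lemma mem_Peaks {j : Fin m} :
    j ∈ Peaks P ↔ P j = true ∧ ∃ h : j.val + 1 < m, P ⟨j.val + 1, h⟩ = false := by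
  simp [Peaks]

lemma mem_Valleys {j : Fin m} :
    j ∈ Valleys P ↔ P j = false ∧ ∃ h : j.val + 1 < m, P ⟨j.val + 1, h⟩ = true := by
  simp [Valleys]

lemma UpCt_succ_of_eq_false {j : Fin m} (h : P j = false) : UpCt P (j.val + 1) = UpCt P j := by
  simpa [h] using UpCt_succ P j.isLt

lemma strictMonoOn_UpCt_valleys :
    StrictMonoOn (fun j : Fin m => UpCt P (j.val + 1)) (Valleys P : Set (Fin m)) := by
  intro a ha b _ hab
  obtain ⟨-, hsucc, hPsucc⟩ := mem_Valleys.1 ha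
  exact UpCt_lt_of_eq_true hPsucc le_rfl (show a.val + 1 < b.val + 1 by simpa using hab)

lemma strictMonoOn_DownCt_valleys :
    StrictMonoOn (fun j : Fin m => DownCt P (j.val + 1)) (Valleys P : Set (Fin m)) :=
  fun _ _ b hb hab => DownCt_lt_of_eq_false (mem_Valleys.1 hb).1 (Nat.succ_le_of_lt hab) (by omega)

lemma valley_DownCt_le_iff {v : Fin m} (hv : v ∈ Valleys P) (j : ℕ) :
    DownCt P (v.val + 1) ≤ DownCt P j ↔ v.val < j := by
  refine ⟨fun h => ?_, fun h => DownCt_mono P h⟩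
  by_contra! hjv
  exact absurd h (not_le.2 (DownCt_lt_of_eq_false (mem_Valleys.1 hv).1 hjv (by omega)))

lemma valley_UpCt_lt_iff {v : Fin m} (hv : v ∈ Valleys P) (j : ℕ) :
    UpCt P (v.val + 1) < UpCt P j ↔ v.val + 1 < j := by
  obtain ⟨-, hsucc, hPsucc⟩ := mem_Valleys.1 hv
  refine ⟨fun h => ?_, fun h => UpCt_lt_of_eq_true hPsucc le_rfl h⟩
  by_contra! hjv
  exact absurd h (not_lt.2 (UpCt_mono P hjv))

/-- The last `U` before a `D` at position `j` is a peak at the height of `j`. -/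
lemma exists_peak_of_eq_false {a j : Fin m} (ha : P a = true) (hj : P j = false) (haj : a < j) :
    ∃ p ∈ Peaks P, p < j ∧ UpCt P (p.val + 1) = UpCt P j := by
  let IsUp : ℕ → Prop := fun k => ∃ h : k < m, P ⟨k, h⟩ = true
  have hspec : IsUp (Nat.findGreatest IsUp j) := Nat.findGreatest_spec haj.le ⟨a.isLt, ha⟩
  have hlater : ∀ k : Fin m, Nat.findGreatest IsUp j < k.val → k.val ≤ j → P k = false :=
    fun k hpk hkj => by simpa [IsUp] using Nat.findGreatest_is_greatest hpk hkj
  have hle := Nat.findGreatest_le (P := IsUp) j.val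
  generalize Nat.findGreatest IsUp j = p at hspec hlater hle
  obtain ⟨hpm, hPp⟩ := hspec
  have hpj : p < j.val := by
    refine lt_of_le_of_ne hle fun h => ?_
    rw [show (⟨p, hpm⟩ : Fin m) = j from Fin.ext h, hj] at hPp
    exact Bool.false_ne_true hPp
  refine ⟨⟨p, hpm⟩, mem_Peaks.2 ⟨hPp, show p + 1 < m by omega,
    hlater _ (by simp) (by simp; omega)⟩, hpj, ?_⟩
  exact (UpCt_eq_of_forall_eq_false hpj fun k hk hkj => hlater k (by omega) hkj.le).symm

/-- The last `D` before the first `U` after position `j` is a valley at the height of `j`. -/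
lemma exists_valley_of_eq_false {j b : Fin m} (hj : P j = false) (hb : P b = true) (hjb : j < b) :
    ∃ v ∈ Valleys P, j ≤ v ∧ UpCt P (v.val + 1) = UpCt P j := by
  have hex : ∃ w, j.val < w ∧ ∃ h : w < m, P ⟨w, h⟩ = true := ⟨b, hjb, b.isLt, hb⟩
  obtain ⟨hjw, hwm, hPw⟩ := Nat.find_spec hex
  set w := Nat.find hex
  have hbefore : ∀ k : Fin m, j.val ≤ k.val → k.val < w → P k = false := fun k hjk hkw => by
    rcases hjk.eq_or_lt with h | h
    · rwa [← Fin.ext h]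
    · simpa [h] using Nat.find_min hex hkw
  have hw : w - 1 + 1 = w := by omega
  refine ⟨⟨w - 1, by omega⟩, mem_Valleys.2 ⟨hbefore _ (by simp; omega) (by simp; omega),
    by simp; omega, by simpa [hw] using hPw⟩, Fin.mk_le_mk.2 (by omega), ?_⟩
  simpa [hw] using UpCt_eq_of_forall_eq_false hjw.le hbefore

end PeaksValleys

namespace IsDyck

variable {n : ℕ} {P : Fin (2 * n) → Bool}

lemma UpCt_length (hP : IsDyck P) : UpCt P (2 * n) = n := by
  have := UpCt_add_DownCt P le_rfl
  have := hP.2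
  omega

lemma UpCt_le (hP : IsDyck P) (i : ℕ) : UpCt P i ≤ n :=
  (UpCt_le_UpCt_length P i).trans hP.UpCt_length.le

lemma DownCt_le (hP : IsDyck P) (i : ℕ) : DownCt P i ≤ n := by
  have := UpCt_add_DownCt P le_rfl
  have := UpCt_le_UpCt_length (fun j => !P j) i
  rw [← DownCt_eq_UpCt_not, ← DownCt_eq_UpCt_not] at this
  have := hP.2
  omega

lemma head_eq_true (hP : IsDyck P) (hn : 0 < n) : P ⟨0, by omega⟩ = true := by
  have h1 := hP.1 1 (by omega)
  have h2 := UpCt_add_DownCt P (show 1 ≤ 2 * n by omega)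
  have h3 := UpCt_succ P (show 0 < 2 * n by omega)
  rw [zero_add, UpCt_zero, zero_add] at h3
  cases h : P ⟨0, by omega⟩
  · simp only [h, Bool.false_eq_true, if_false] at h3
    omega
  · rfl

lemma last_eq_false (hP : IsDyck P) (hn : 0 < n) : P ⟨2 * n - 1, by omega⟩ = false := by
  have h1 := hP.1 (2 * n - 1) (by omega)
  have h2 := UpCt_add_DownCt P (show 2 * n - 1 ≤ 2 * n by omega)
  have h3 := UpCt_succ P (show 2 * n - 1 < 2 * n by omega)
  have h4 := hP.UpCt_length
  rw [show 2 * n - 1 + 1 = 2 * n by omega] at h3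
  cases h : P ⟨2 * n - 1, _⟩
  · rfl
  · simp only [h, if_true] at h3; omega

lemma betaPath_le_alphaPath (hP : IsDyck P) : betaPath P ≤ alphaPath P :=
  sum_le_sum fun v _ => hP.1 _ (by omega)

end IsDyck

section Coordinates

variable {m : ℕ}

/-- Reading `U` as a north and `D` as an east step, the peaks and valleys of a word are lattice
points; `peakYs`, `valleyYs` and `valleyXs` record their coordinates. -/
def peakYs (P : Fin m → Bool) : Finset ℕ := (Peaks P).image fun j => UpCt P (j.val + 1)

def valleyYs (P : Fin m → Bool) : Finset ℕ := (Valleys P).image fun j => UpCt P (j.val + 1)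

def valleyXs (P : Fin m → Bool) : Finset ℕ := (Valleys P).image fun j => DownCt P (j.val + 1)

variable {P : Fin m → Bool}

lemma card_valleyYs : #(valleyYs P) = desPath P :=
  card_image_of_injOn strictMonoOn_UpCt_valleys.injOn

lemma card_valleyXs : #(valleyXs P) = desPath P :=
  card_image_of_injOn strictMonoOn_DownCt_valleys.injOn

lemma sum_valleyYs : ∑ y ∈ valleyYs P, y = alphaPath P :=
  sum_image fun _ ha _ hb h => strictMonoOn_UpCt_valleys.injOn ha hb h

lemma sum_valleyXs : ∑ x ∈ valleyXs P, x = betaPath P :=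
  sum_image fun _ ha _ hb h => strictMonoOn_DownCt_valleys.injOn ha hb h

lemma zero_notMem_valleyXs : 0 ∉ valleyXs P := by
  simp only [valleyXs, mem_image, not_exists, not_and]
  intro v hv h
  have := DownCt_lt_of_eq_false (mem_Valleys.1 hv).1 (Nat.zero_le _)
    (show v.val < v.val + 1 by omega)
  omega

lemma card_valleyXs_filter_le (j : ℕ) :
    #((valleyXs P).filter (· ≤ DownCt P j)) = #((Valleys P).filter (·.val < j)) := by
  rw [valleyXs, filter_image, card_image_of_injOn (strictMonoOn_DownCt_valleys.injOn.mono
    (coe_subset.2 (filter_subset _ _))), filter_congr fun v hv => valley_DownCt_le_iff hv j]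

lemma card_valleyYs_filter_lt (j : ℕ) :
    #((valleyYs P).filter (· < UpCt P j)) = #((Valleys P).filter (·.val + 1 < j)) := by
  rw [valleyYs, filter_image, card_image_of_injOn (strictMonoOn_UpCt_valleys.injOn.mono
    (coe_subset.2 (filter_subset _ _))), filter_congr fun v hv => valley_UpCt_lt_iff hv j]

end Coordinates

namespace IsDyck

variable {n : ℕ} {P : Fin (2 * n) → Bool}

lemma peakYs_eq_insert (hP : IsDyck P) (hn : 0 < n) : peakYs P = insert n (valleyYs P) := by
  have hhead := hP.head_eq_true hn
  ext y
  simp only [peakYs, valleyYs, mem_insert, mem_image]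
  constructor
  · rintro ⟨p, hp, rfl⟩
    refine (hP.UpCt_le _).eq_or_lt.imp id fun hlt => ?_
    obtain ⟨-, hsucc, hPsucc⟩ := mem_Peaks.1 hp
    obtain ⟨b, hb, -, hPb⟩ := exists_eq_true_of_UpCt_lt (hlt.trans_eq hP.UpCt_length.symm)
    obtain ⟨v, hv, -, hvy⟩ := exists_valley_of_eq_false hPsucc hPb
      (show p.val + 1 < b.val by
        refine lt_of_le_of_ne hb fun h => ?_
        rw [show b = ⟨p.val + 1, hsucc⟩ from Fin.ext h.symm, hPsucc] at hPb
        exact Bool.false_ne_true hPb)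
    exact ⟨v, hv, hvy⟩
  · rintro (hy | ⟨v, hv, rfl⟩)
    · obtain ⟨p, hp, -, hpy⟩ := exists_peak_of_eq_false hhead (hP.last_eq_false hn)
        (Fin.mk_lt_mk.2 (show 0 < 2 * n - 1 by omega))
      have hlast := UpCt_succ_of_eq_false (hP.last_eq_false hn)
      rw [show 2 * n - 1 + 1 = 2 * n by omega, hP.UpCt_length] at hlast
      exact ⟨p, hp, by rw [hy, hpy, ← hlast]⟩
    · have hPv := (mem_Valleys.1 hv).1
      obtain ⟨p, hp, -, hpy⟩ := exists_peak_of_eq_false hhead hPv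
        (Fin.lt_def.2 <| Nat.pos_of_ne_zero fun h => by
          rw [show v = ⟨0, by omega⟩ from Fin.ext h, hhead] at hPv
          simp at hPv)
      exact ⟨p, hp, hpy.trans (UpCt_succ_of_eq_false hPv).symm⟩

lemma notMem_valleyYs (hP : IsDyck P) : n ∉ valleyYs P := by
  simp only [valleyYs, mem_image, not_exists, not_and]
  intro v hv h
  obtain ⟨-, hsucc, hPsucc⟩ := mem_Valleys.1 hv
  have : UpCt P (v.val + 1) < UpCt P (v.val + 1 + 1) :=
    UpCt_lt_of_eq_true hPsucc le_rfl (by simp)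
  have := hP.UpCt_le (v.val + 1 + 1)
  omega

lemma card_peakYs (hP : IsDyck P) (hn : 0 < n) : #(peakYs P) = desPath P + 1 := by
  rw [hP.peakYs_eq_insert hn, card_insert_of_notMem hP.notMem_valleyYs, card_valleyYs]

lemma sum_peakYs (hP : IsDyck P) (hn : 0 < n) : ∑ y ∈ peakYs P, y = n + alphaPath P := by
  rw [hP.peakYs_eq_insert hn, sum_insert hP.notMem_valleyYs, sum_valleyYs]

lemma card_peakYs_filter_lt (hP : IsDyck P) (hn : 0 < n) (j : ℕ) :
    #((peakYs P).filter (· < UpCt P j)) = #((Valleys P).filter (·.val + 1 < j)) := by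
  rw [hP.peakYs_eq_insert hn, filter_insert, if_neg (not_lt.2 (hP.UpCt_le j)),
    card_valleyYs_filter_lt]

lemma card_peakYs_filter_lt_le (hP : IsDyck P) (hn : 0 < n) {i : ℕ} (hi : i ≤ n) :
    #((peakYs P).filter (· < i)) ≤ #((valleyXs P).filter (· < i)) := by
  rw [hP.peakYs_eq_insert hn, filter_insert, if_neg (by omega), valleyYs, valleyXs,
    filter_image, filter_image,
    card_image_of_injOn (strictMonoOn_UpCt_valleys.injOn.mono
      (coe_subset.2 (filter_subset _ _))),
    card_image_of_injOn (strictMonoOn_DownCt_valleys.injOn.mono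
      (coe_subset.2 (filter_subset _ _)))]
  refine card_le_card fun v hv => ?_
  simp only [mem_filter] at hv ⊢
  exact ⟨hv.1, (hP.1 _ (by omega)).trans_lt hv.2⟩

end IsDyck

lemma sum_card_filter_lt (S : Finset ℕ) : ∑ s ∈ S, #(S.filter (· < s)) = (#S).choose 2 := by
  induction S using Finset.induction_on_max with
  | empty => simp
  | insert a S hlt ih =>
    have ha : a ∉ S := fun h => lt_irrefl a (hlt a h)
    rw [sum_insert ha, card_insert_of_notMem ha, Nat.choose_succ_succ', Nat.choose_one_right,
      filter_insert, if_neg (lt_irrefl a), filter_true_of_mem hlt, ← ih, add_left_cancel_iff]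
    refine sum_congr rfl fun s hs => ?_
    rw [filter_insert, if_neg (not_lt.2 (hlt s hs).le)]

section EastSteps

variable {m : ℕ}

def ofEastSteps (S : Finset ℕ) : Fin m → Bool := fun i => decide (i.val ∉ S)

lemma ofEastSteps_eq_false {S : Finset ℕ} {i : Fin m} :
    ofEastSteps S i = false ↔ i.val ∈ S := by
  simp [ofEastSteps]

lemma DownCt_ofEastSteps (S : Finset ℕ) {i : ℕ} (hi : i ≤ m) :
    DownCt (ofEastSteps (m := m) S) i = #(S.filter (· < i)) := by
  refine card_nbij (fun j => j.val) (fun j hj => ?_) (fun a _ b _ h => Fin.ext h)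
    (fun s hs => ?_)
  · simp only [mem_coe, mem_filter, mem_univ, true_and, ofEastSteps_eq_false] at hj ⊢
    exact ⟨hj.2, hj.1⟩
  · rw [mem_coe, mem_filter] at hs
    exact ⟨⟨s, by omega⟩, by simp [ofEastSteps_eq_false, hs.1, hs.2], rfl⟩

lemma UpCt_ofEastSteps_add (S : Finset ℕ) {i : ℕ} (hi : i ≤ m) :
    UpCt (ofEastSteps (m := m) S) i + #(S.filter (· < i)) = i := by
  rw [← DownCt_ofEastSteps S hi, UpCt_add_DownCt _ hi]

lemma colPoly_ofEastSteps {S : Finset ℕ} (hS : ∀ s ∈ S, s < m) :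
    colPoly (ofEastSteps (m := m) S) = #S := by
  have h := UpCt_ofEastSteps_add (m := m) S le_rfl
  rw [filter_true_of_mem hS] at h
  have hcol : colPoly (ofEastSteps (m := m) S) = DownCt (ofEastSteps (m := m) S) m :=
    congrArg card <| filter_congr fun j _ => by simp [j.isLt]
  have := UpCt_add_DownCt (ofEastSteps (m := m) S) le_rfl
  omega

lemma eSum_ofEastSteps {S : Finset ℕ} (hS : ∀ s ∈ S, s < m) :
    eSum (ofEastSteps (m := m) S) + (#S).choose 2 = ∑ s ∈ S, s := by
  have hE : eSum (ofEastSteps (m := m) S) = ∑ s ∈ S, UpCt (ofEastSteps (m := m) S) s := by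
    refine sum_nbij (fun j => j.val) (fun j hj => ?_) (fun a _ b _ h => Fin.ext h)
      (fun s hs => ⟨⟨s, hS s hs⟩, by simpa [ofEastSteps_eq_false] using hs, rfl⟩)
      (fun _ _ => rfl)
    simpa [ofEastSteps_eq_false] using hj
  rw [hE, ← sum_card_filter_lt, ← sum_add_distrib]
  exact sum_congr rfl fun s hs => UpCt_ofEastSteps_add S (hS s hs).le

end EastSteps

section Polyomino

variable {n : ℕ}

def upperPath (P : Fin (2 * n) → Bool) : Fin (n + 1) → Bool := ofEastSteps (peakYs P)

def lowerPath (P : Fin (2 * n) → Bool) : Fin (n + 1) → Bool :=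
  ofEastSteps (insert 0 (valleyXs P))

namespace IsDyck

variable {P : Fin (2 * n) → Bool}

lemma peakYs_lt (hP : IsDyck P) : ∀ y ∈ peakYs P, y < n + 1 := by
  simp only [peakYs, mem_image]
  rintro _ ⟨p, -, rfl⟩
  exact Nat.lt_succ_of_le (hP.UpCt_le _)

lemma insert_zero_valleyXs_lt (hP : IsDyck P) : ∀ x ∈ insert 0 (valleyXs P), x < n + 1 := by
  simp only [valleyXs, mem_insert, mem_image]
  rintro _ (rfl | ⟨v, -, rfl⟩)
  · exact Nat.succ_pos n
  · exact Nat.lt_succ_of_le (hP.DownCt_le _)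

lemma card_insert_zero_valleyXs : #(insert 0 (valleyXs P)) = desPath P + 1 := by
  rw [card_insert_of_notMem zero_notMem_valleyXs, card_valleyXs]

lemma isParaPoly (hP : IsDyck P) (hn : 0 < n) : IsParaPoly (upperPath P) (lowerPath P) := by
  have hU (i) (hi : i ≤ n + 1) : UpCt (upperPath P) i + #((peakYs P).filter (· < i)) = i :=
    UpCt_ofEastSteps_add _ hi
  have hV (i) (hi : i ≤ n + 1) :
      UpCt (lowerPath P) i + #((insert 0 (valleyXs P)).filter (· < i)) = i :=
    UpCt_ofEastSteps_add _ hi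
  refine ⟨?_, fun i hi hi1 => ?_, ?_, ?_⟩
  · have hU' := hU (n + 1) le_rfl
    have hV' := hV (n + 1) le_rfl
    rw [filter_true_of_mem hP.peakYs_lt, hP.card_peakYs hn] at hU'
    rw [filter_true_of_mem hP.insert_zero_valleyXs_lt, card_insert_zero_valleyXs] at hV'
    omega
  · have hU' := hU i hi.le
    have hV' := hV i hi.le
    have hle := hP.card_peakYs_filter_lt_le hn (show i ≤ n by omega)
    rw [filter_insert, if_pos (show 0 < i by omega),
      card_insert_of_notMem fun h => zero_notMem_valleyXs (mem_filter.1 h).1] at hV'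
    omega
  · have h0 : lowerPath P ⟨0, Nat.succ_pos n⟩ = false :=
      ofEastSteps_eq_false.2 (mem_insert_self _ _)
    simpa [UpCt_zero] using UpCt_succ_of_eq_false h0
  · have hlast : upperPath P ⟨n, Nat.lt_succ_self n⟩ = false :=
      ofEastSteps_eq_false.2 (hP.peakYs_eq_insert hn ▸ mem_insert_self _ _)
    simpa using UpCt_succ_of_eq_false hlast

lemma areaPoly_eq (hP : IsDyck P) (hn : 0 < n) :
    areaPoly (upperPath P) (lowerPath P) = n + (alphaPath P - betaPath P) := by
  have hU := eSum_ofEastSteps hP.peakYs_lt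
  have hV := eSum_ofEastSteps hP.insert_zero_valleyXs_lt
  rw [hP.sum_peakYs hn, hP.card_peakYs hn] at hU
  rw [sum_insert zero_notMem_valleyXs, sum_valleyXs, card_insert_zero_valleyXs] at hV
  have := hP.betaPath_le_alphaPath
  simp only [areaPoly, upperPath, lowerPath]
  omega

lemma colPoly_upperPath (hP : IsDyck P) (hn : 0 < n) : colPoly (upperPath P) = desPath P + 1 := by
  rw [upperPath, colPoly_ofEastSteps hP.peakYs_lt, hP.card_peakYs hn]

end IsDyck

end Polyomino

lemma card_filter_lt_eq_card_filter_succ_lt_iff {m : ℕ} (s : Finset (Fin m)) (j : ℕ) :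
    #(s.filter (·.val < j)) = #(s.filter (·.val + 1 < j)) ↔ ∀ v ∈ s, v.val + 1 ≠ j := by
  have hsub : s.filter (·.val + 1 < j) ⊆ s.filter (·.val < j) :=
    monotone_filter_right _ fun v h => by omega
  refine ⟨fun h v hv hvj => ?_, fun h => congrArg card <| filter_congr fun v hv => ?_⟩
  · have hmem : v ∈ s.filter (·.val < j) := mem_filter.2 ⟨hv, by omega⟩
    rw [← eq_of_subset_of_card_le hsub h.le, mem_filter] at hmem
    omega
  · have := h v hv
    omega

namespace IsDyck

variable {n : ℕ} {P : Fin (2 * n) → Bool}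

lemma eq_false_iff (hP : IsDyck P) (hn : 0 < n) (j : Fin (2 * n)) :
    P j = false ↔ UpCt P j ∈ peakYs P ∧ ∀ v ∈ Valleys P, v.val + 1 ≠ j.val := by
  have hhead := hP.head_eq_true hn
  constructor
  · intro hj
    have hj0 : 0 < j.val := Nat.pos_of_ne_zero fun h => by
      rw [show j = ⟨0, by omega⟩ from Fin.ext h, hhead] at hj
      simp at hj
    obtain ⟨p, hp, -, hpy⟩ := exists_peak_of_eq_false hhead hj (Fin.lt_def.2 hj0)
    refine ⟨mem_image.2 ⟨p, hp, hpy⟩, fun v hv hvj => ?_⟩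
    obtain ⟨-, hsucc, hPsucc⟩ := mem_Valleys.1 hv
    rw [show (⟨v.val + 1, hsucc⟩ : Fin (2 * n)) = j from Fin.ext hvj, hj] at hPsucc
    simp at hPsucc
  · rintro ⟨hy, hnv⟩
    by_contra hj
    rw [Bool.not_eq_false] at hj
    obtain ⟨p, hp, hpy⟩ := mem_image.1 hy
    obtain ⟨-, hsucc, hPsucc⟩ := mem_Peaks.1 hp
    have hpj : p.val + 1 < j.val := by
      rcases lt_trichotomy (p.val + 1) j.val with h | h | h
      · exact h
      · rw [show (⟨p.val + 1, hsucc⟩ : Fin (2 * n)) = j from Fin.ext h, hj] at hPsucc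
        simp at hPsucc
      · have := UpCt_lt_of_eq_true hj le_rfl (show j.val < p.val + 1 by omega)
        omega
    have hprev : P ⟨j.val - 1, by omega⟩ = false := by
      by_contra hprev
      rw [Bool.not_eq_false] at hprev
      have := UpCt_lt_of_eq_true hprev (show p.val + 1 ≤ j.val - 1 by simp; omega)
        (show j.val - 1 < j.val by simp; omega)
      omega
    refine hnv ⟨j.val - 1, by omega⟩ (mem_Valleys.2 ⟨hprev, by simp; omega, ?_⟩)
      (by simp; omega)
    rwa [show (⟨j.val - 1 + 1, _⟩ : Fin (2 * n)) = j from Fin.ext (by simp; omega)]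

lemma eq_false_iff_paths (hP : IsDyck P) (hn : 0 < n) (j : Fin (2 * n)) :
    P j = false ↔ upperPath P ⟨UpCt P j, Nat.lt_succ_of_le (hP.UpCt_le _)⟩ = false ∧
      DownCt (lowerPath P) (DownCt P j + 1) = DownCt (upperPath P) (UpCt P j) + 1 := by
  rw [upperPath, lowerPath, ofEastSteps_eq_false,
    DownCt_ofEastSteps _ (Nat.succ_le_succ (hP.DownCt_le _)),
    DownCt_ofEastSteps _ (Nat.le_succ_of_le (hP.UpCt_le _)), hP.card_peakYs_filter_lt hn,
    filter_insert, if_pos (Nat.succ_pos _), card_insert_of_notMem fun h =>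
      zero_notMem_valleyXs (mem_filter.1 h).1,
    filter_congr fun x _ => Nat.lt_succ_iff, card_valleyXs_filter_le, add_left_inj,
    card_filter_lt_eq_card_filter_succ_lt_iff]
  exact hP.eq_false_iff hn j

lemma eq_of_upperPath_eq_of_lowerPath_eq {Q : Fin (2 * n) → Bool} (hP : IsDyck P)
    (hQ : IsDyck Q) (hn : 0 < n) (hU : upperPath P = upperPath Q)
    (hV : lowerPath P = lowerPath Q) : P = Q := by
  suffices h : ∀ i, ∀ j : Fin (2 * n), j.val < i → P j = Q j from
    funext fun j => h _ j (Nat.lt_succ_self _)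
  intro i
  induction i with
  | zero => exact fun j hj => absurd hj (Nat.not_lt_zero _)
  | succ i ih =>
    intro j hj
    rcases (Nat.lt_succ_iff.1 hj).lt_or_eq with hlt | rfl
    · exact ih j hlt
    have hu : UpCt P j = UpCt Q j := UpCt_congr ih
    have hd : DownCt P j = DownCt Q j := DownCt_congr ih
    have key : P j = false ↔ Q j = false := by
      rw [hP.eq_false_iff_paths hn, hQ.eq_false_iff_paths hn]
      simp only [hU, hV, hu, hd]
    cases hPj : P j <;> cases hQj : Q j <;> simp_all

end IsDyck

section Interleave

variable {n : ℕ}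

/-- The word `¬V₀ U₁ ¬V₁ U₂ … ¬Vₙ₋₁ Uₙ`. -/
def interleave (U V : Fin (n + 1) → Bool) : Fin (2 * n) → Bool :=
  fun j => if j.val % 2 = 0 then !V ⟨j.val / 2, by omega⟩ else U ⟨j.val / 2 + 1, by omega⟩

variable {U V : Fin (n + 1) → Bool}

lemma interleave_even {i : ℕ} (hi : i < n) :
    interleave U V ⟨2 * i, by omega⟩ = !V ⟨i, by omega⟩ := by
  simp [interleave]

lemma interleave_odd {i : ℕ} (hi : i < n) :
    interleave U V ⟨2 * i + 1, by omega⟩ = U ⟨i + 1, by omega⟩ := by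
  simp only [interleave, Nat.mul_add_mod_self_left, Nat.one_mod, one_ne_zero, if_false]
  congr 2
  omega

lemma UpCt_interleave_two_mul_add_one {i : ℕ} (hi : i < n) :
    UpCt (interleave U V) (2 * i + 1) + UpCt V (i + 1) =
      UpCt (interleave U V) (2 * i) + UpCt V i + 1 := by
  rw [UpCt_succ _ (show 2 * i < 2 * n by omega), UpCt_succ V (show i < n + 1 by omega),
    interleave_even hi]
  cases V ⟨i, by omega⟩ <;> simp <;> omega

lemma UpCt_interleave_two_mul {i : ℕ} (hi : i ≤ n) :
    UpCt (interleave U V) (2 * i) + UpCt V i + UpCt U 1 = i + UpCt U (i + 1) := by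
  induction i with
  | zero => simp [UpCt_zero]
  | succ i ih =>
    have hW := UpCt_succ (interleave U V) (show 2 * i + 1 < 2 * n by omega)
    have hU := UpCt_succ U (show i + 1 < n + 1 by omega)
    rw [interleave_odd (by omega)] at hW
    have := UpCt_interleave_two_mul_add_one (U := U) (V := V) (show i < n by omega)
    have := ih (by omega)
    rw [show 2 * (i + 1) = 2 * i + 1 + 1 by ring]
    omega

namespace IsParaPoly

lemma UpCt_one (h : IsParaPoly U V) (hn : 0 < n) : UpCt U 1 = 1 := by
  have := h.2.1 1 (by omega) le_rfl
  have := UpCt_succ U (show 0 < n + 1 by omega)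
  rw [zero_add, UpCt_zero] at this
  split_ifs at this <;> omega

lemma head_eq_true (h : IsParaPoly U V) (hn : 0 < n) : U ⟨0, by omega⟩ = true := by
  have h1 := h.UpCt_one hn
  have := UpCt_succ U (show 0 < n + 1 by omega)
  rw [zero_add, UpCt_zero, h1] at this
  by_contra hU
  rw [Bool.not_eq_true] at hU
  rw [hU] at this
  simp at this

lemma UpCt_lower_last (h : IsParaPoly U V) (hn : 0 < n) : UpCt V (n + 1) = UpCt V n + 1 := by
  obtain ⟨hend, hdom, -, hUend⟩ := h
  have := hdom n (by omega) hn
  have := UpCt_succ V (show n < n + 1 by omega)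
  simp only [Nat.add_sub_cancel] at hUend
  split_ifs at this <;> omega

lemma last_eq_true (h : IsParaPoly U V) (hn : 0 < n) : V ⟨n, by omega⟩ = true := by
  have h1 := h.UpCt_lower_last hn
  have := UpCt_succ V (show n < n + 1 by omega)
  by_contra hV
  rw [Bool.not_eq_true] at hV
  rw [hV] at this
  simp only [Bool.false_eq_true, if_false] at this
  omega

lemma isDyck_interleave (h : IsParaPoly U V) (hn : 0 < n) : IsDyck (interleave U V) := by
  have hU1 := h.UpCt_one hn
  have hlast := h.UpCt_lower_last hn
  obtain ⟨hend, hdom, -, hUend⟩ := h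
  simp only [Nat.add_sub_cancel] at hUend
  refine ⟨fun i hi => ?_, ?_⟩
  · have hsum := UpCt_add_DownCt (interleave U V) hi
    obtain ⟨k, rfl | rfl⟩ := Nat.even_or_odd' i
    · have := UpCt_interleave_two_mul (U := U) (V := V) (show k ≤ n by omega)
      have := UpCt_mono U (show k ≤ k + 1 by omega)
      rcases Nat.eq_zero_or_pos k with rfl | hk
      · simp [UpCt_zero] at hsum ⊢
        omega
      · have := hdom k (by omega) hk
        omega
    · have := UpCt_interleave_two_mul (U := U) (V := V) (show k ≤ n by omega)
      have := UpCt_interleave_two_mul_add_one (U := U) (V := V) (show k < n by omega)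
      have := hdom (k + 1) (by omega) (by omega)
      omega
  · have := UpCt_add_DownCt (interleave U V) le_rfl
    have := UpCt_interleave_two_mul (U := U) (V := V) le_rfl
    omega

lemma interleave_injective {U' V' : Fin (n + 1) → Bool} (h : IsParaPoly U V)
    (h' : IsParaPoly U' V') (hn : 0 < n) (heq : interleave U V = interleave U' V') :
    U = U' ∧ V = V' := by
  refine ⟨funext fun i => ?_, funext fun i => ?_⟩
  · rcases Nat.eq_zero_or_pos i.val with h0 | h0
    · rw [show i = ⟨0, by omega⟩ from Fin.ext h0, h.head_eq_true hn, h'.head_eq_true hn]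
    · have := congrFun heq ⟨2 * (i.val - 1) + 1, by omega⟩
      rwa [interleave_odd (by omega), interleave_odd (by omega),
        show (⟨i.val - 1 + 1, _⟩ : Fin (n + 1)) = i from Fin.ext (by simp; omega)] at this
  · rcases (Nat.lt_succ_iff.1 i.isLt).lt_or_eq with hlt | hlast
    · have := congrFun heq ⟨2 * i.val, by omega⟩
      rw [interleave_even hlt, interleave_even hlt] at this
      simpa using this
    · rw [show i = ⟨n, by omega⟩ from Fin.ext hlast, h.last_eq_true hn, h'.last_eq_true hn]

end IsParaPoly

end Interleave

lemma mem_DyckSet {n : ℕ} {P : Fin (2 * n) → Bool} : P ∈ DyckSet n ↔ IsDyck P := by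
  simp [DyckSet]

lemma mem_ParaSet {m : ℕ} {UV : (Fin m → Bool) × (Fin m → Bool)} :
    UV ∈ ParaSet m ↔ IsParaPoly UV.1 UV.2 := by
  simp [ParaSet]

lemma card_ParaSet_succ_le {n : ℕ} (hn : 0 < n) : #(ParaSet (n + 1)) ≤ #(DyckSet n) :=
  card_le_card_of_injOn (fun UV => interleave UV.1 UV.2)
    (fun _ hUV => mem_DyckSet.2 ((mem_ParaSet.1 hUV).isDyck_interleave hn))
    (fun _ ha _ hb hab => Prod.ext_iff.2 <|
      (mem_ParaSet.1 ha).interleave_injective (mem_ParaSet.1 hb) hn hab)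

lemma PPoly_succ {n : ℕ} (hn : 0 < n) :
    PPoly (n + 1) = ∑ P ∈ DyckSet n,
      (X 0 : MvPolynomial (Fin 2) ℤ) ^ (n + (alphaPath P - betaPath P)) *
        X 1 ^ (desPath P + 1) := by
  let f : (Fin (2 * n) → Bool) → (Fin (n + 1) → Bool) × (Fin (n + 1) → Bool) :=
    fun P => (upperPath P, lowerPath P)
  have hmaps : Set.MapsTo f (DyckSet n) (ParaSet (n + 1)) := fun P hP =>
    mem_ParaSet.2 ((mem_DyckSet.1 hP).isParaPoly hn)
  have hinj : Set.InjOn f (DyckSet n) := fun P hP Q hQ h =>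
    (mem_DyckSet.1 hP).eq_of_upperPath_eq_of_lowerPath_eq (mem_DyckSet.1 hQ) hn
      (congrArg Prod.fst h) (congrArg Prod.snd h)
  refine (sum_nbij f hmaps hinj (surjOn_of_injOn_of_card_le f hmaps hinj
    (card_ParaSet_succ_le hn)) fun P hP => ?_).symm
  rw [(mem_DyckSet.1 hP).areaPoly_eq hn, (mem_DyckSet.1 hP).colPoly_upperPath hn]

lemma PPoly_one : PPoly 1 = X 1 := by
  have hPara : ParaSet 1 = {(fun _ => false, fun _ => false)} := by decide
  have harea : areaPoly (m := 1) (fun _ => false) (fun _ => false) = 0 := by decide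
  have hcol : colPoly (m := 1) (fun _ => false) = 1 := by decide
  rw [PPoly, hPara, sum_singleton, harea, hcol, pow_zero, pow_one, one_mul]

/-- `α(P) ≥ β(P)` for every Dyck path, and
`P_{n+1}(q,t) = q^n t Σ_{P ∈ D_n} q^{α(P)-β(P)} t^{des P}`. -/
theorem stmt7 (n : ℕ) :
    (∀ P ∈ DyckSet n, betaPath P ≤ alphaPath P) ∧
    PPoly (n + 1) = X 0 ^ n * X 1 *
      ∑ P ∈ DyckSet n,
        (X 0 : MvPolynomial (Fin 2) ℤ) ^ (alphaPath P - betaPath P) * X 1 ^ desPath P := by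
  refine ⟨fun P hP => (mem_DyckSet.1 hP).betaPath_le_alphaPath, ?_⟩
  rcases Nat.eq_zero_or_pos n with rfl | hn
  · have hDyck : DyckSet 0 = {Fin.elim0} := by decide
    have hstats : alphaPath (m := 2 * 0) Fin.elim0 = 0 ∧ betaPath (m := 2 * 0) Fin.elim0 = 0 ∧
        desPath (m := 2 * 0) Fin.elim0 = 0 := by decide
    rw [PPoly_one, hDyck, sum_singleton, hstats.1, hstats.2.1, hstats.2.2]
    ring
  · rw [PPoly_succ hn, mul_sum]
    exact sum_congr rfl fun P _ => by ring
end

section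
/- The polynomial A_{n,k}(q) is symmetric: for all integers n ≥ 1, k ≥ 0, and every integer i with 0 ≤ i ≤ nk, the number of 321-avoiding permutations σ of [n] with des σ = k and maj σ = i equals the number of 321-avoiding permutations σ of [n] with des σ = k and maj σ = nk − i. -/
open Finset MvPolynomial

/-- The reverse-complement of a permutation. -/
def rcPerm {n : ℕ} (σ : Equiv.Perm (Fin n)) : Equiv.Perm (Fin n) :=
  (Fin.revPerm.trans σ).trans Fin.revPerm

lemma rcPerm_apply {n : ℕ} (σ : Equiv.Perm (Fin n)) (j : Fin n) :
    rcPerm σ j = (σ j.rev).rev := rfl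

lemma rcPerm_rcPerm {n : ℕ} (σ : Equiv.Perm (Fin n)) : rcPerm (rcPerm σ) = σ := by
  ext j
  simp [rcPerm_apply, Fin.rev_rev]

lemma avoids_rcPerm {n : ℕ} (σ : Equiv.Perm (Fin n)) (h : Avoids321 σ) :
    Avoids321 (rcPerm σ) := by
  rintro ⟨a, b, c, hab, hbc, h1, h2⟩
  refine h ⟨c.rev, b.rev, a.rev, ?_, ?_, ?_, ?_⟩
  · exact Fin.rev_lt_rev.mpr hbc
  · exact Fin.rev_lt_rev.mpr hab
  · rw [rcPerm_apply, rcPerm_apply, Fin.rev_lt_rev] at h2; exact h2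
  · rw [rcPerm_apply, rcPerm_apply, Fin.rev_lt_rev] at h1; exact h1

lemma mem_des_rcPerm {n : ℕ} (σ : Equiv.Perm (Fin n)) (i : Fin n)
    (hi : i ∈ DesPerm σ) (hb : n - 2 - i.val < n) :
    (⟨n - 2 - i.val, hb⟩ : Fin n) ∈ DesPerm (rcPerm σ) := by
  simp only [DesPerm, mem_filter, mem_univ, true_and] at hi ⊢
  obtain ⟨h, hlt⟩ := hi
  have hi2 : i.val ≤ n - 2 := by omega
  refine ⟨by omega, ?_⟩
  have e1 : (⟨n - 2 - i.val + 1, by omega⟩ : Fin n).rev = i := by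
    apply Fin.ext; rw [Fin.val_rev]; show n - (n - 2 - i.val + 1 + 1) = i.val; omega
  have e2 : (⟨n - 2 - i.val, hb⟩ : Fin n).rev = ⟨i.val + 1, h⟩ := by
    apply Fin.ext; rw [Fin.val_rev]; show n - (n - 2 - i.val + 1) = i.val + 1; omega
  rw [rcPerm_apply, rcPerm_apply, e1, e2, Fin.rev_lt_rev]
  exact hlt

lemma des_maj_rcPerm {n : ℕ} (hn : 1 ≤ n) (σ : Equiv.Perm (Fin n)) :
    desPerm (rcPerm σ) = desPerm σ ∧
      majPerm (rcPerm σ) + majPerm σ = n * desPerm σ := by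
  have hb : ∀ i : Fin n, n - 2 - i.val < n := fun i => by omega
  have hmem : ∀ (τ : Equiv.Perm (Fin n)) (i : Fin n), i ∈ DesPerm τ →
      (⟨n - 2 - i.val, hb i⟩ : Fin n) ∈ DesPerm (rcPerm τ) :=
    fun τ i h => mem_des_rcPerm τ i h (hb i)
  have hub : ∀ (τ : Equiv.Perm (Fin n)) (i : Fin n), i ∈ DesPerm τ → i.val + 1 < n := by
    intro τ i h
    simp only [DesPerm, mem_filter, mem_univ, true_and] at h
    exact h.1
  have hinv : ∀ (i : Fin n), i.val + 1 < n →
      (⟨n - 2 - (n - 2 - i.val), hb ⟨n - 2 - i.val, hb i⟩⟩ : Fin n) = i := by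
    intro i h; apply Fin.ext; simp; omega
  have hmem' : ∀ i ∈ DesPerm (rcPerm σ), (⟨n - 2 - i.val, hb i⟩ : Fin n) ∈ DesPerm σ := by
    intro i h
    have := hmem (rcPerm σ) i h
    rwa [rcPerm_rcPerm] at this
  constructor
  · unfold desPerm
    apply Finset.card_bij' (fun i _ => (⟨n - 2 - i.val, hb i⟩ : Fin n))
      (fun i _ => (⟨n - 2 - i.val, hb i⟩ : Fin n))
    · intro i h; exact hmem' i h
    · intro i h; exact hmem σ i h
    · intro i h; exact hinv i (hub _ i h)
    · intro i h; exact hinv i (hub _ i h)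
  · unfold majPerm
    have key : ∑ j ∈ DesPerm (rcPerm σ), (j.val + 1) =
        ∑ i ∈ DesPerm σ, (n - 2 - i.val + 1) := by
      apply Finset.sum_bij' (fun i _ => (⟨n - 2 - i.val, hb i⟩ : Fin n))
        (fun i _ => (⟨n - 2 - i.val, hb i⟩ : Fin n))
      · intro i h; exact hmem' i h
      · intro i h; exact hmem σ i h
      · intro i h; exact hinv i (hub _ i h)
      · intro i h; exact hinv i (hub _ i h)
      · intro i h
        have := hub _ i h
        show i.val + 1 = n - 2 - (n - 2 - i.val) + 1
        omega
    rw [key, ← Finset.sum_add_distrib]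
    have : ∀ i ∈ DesPerm σ, (n - 2 - i.val + 1) + (i.val + 1) = n := by
      intro i h; have := hub σ i h; omega
    rw [Finset.sum_congr rfl this, Finset.sum_const, smul_eq_mul, mul_comm]
    rfl

/-- symmetry of `A_{n,k}(q)`: the number of 321-avoiding permutations of `[n]`
with `des = k` and `maj = i` equals the number with `des = k` and `maj = nk - i`. -/
theorem stmt12 (n k i : ℕ) (hn : 1 ≤ n) (hi : i ≤ n * k) :
    ((Av n).filter (fun σ => desPerm σ = k ∧ majPerm σ = i)).card =
      ((Av n).filter (fun σ => desPerm σ = k ∧ majPerm σ = n * k - i)).card := by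
  have hAv : ∀ σ : Equiv.Perm (Fin n), rcPerm σ ∈ Av n ↔ σ ∈ Av n := by
    intro σ
    simp only [Av, mem_filter, mem_univ, true_and]
    constructor
    · intro h; have := avoids_rcPerm _ h; rwa [rcPerm_rcPerm] at this
    · exact avoids_rcPerm σ
  apply Finset.card_bij' (fun σ _ => rcPerm σ) (fun σ _ => rcPerm σ)
  · intro σ h
    simp only [mem_filter] at h ⊢
    obtain ⟨hav, hdes, hmaj⟩ := h
    obtain ⟨hd, hm⟩ := des_maj_rcPerm hn σ
    refine ⟨(hAv σ).mpr hav, by rw [hd, hdes], ?_⟩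
    rw [hdes, hmaj] at hm
    omega
  · intro σ h
    simp only [mem_filter] at h ⊢
    obtain ⟨hav, hdes, hmaj⟩ := h
    obtain ⟨hd, hm⟩ := des_maj_rcPerm hn σ
    refine ⟨(hAv σ).mpr hav, by rw [hd, hdes], ?_⟩
    rw [hdes, hmaj] at hm
    omega
  · intro σ _; exact rcPerm_rcPerm σ
  · intro σ _; exact rcPerm_rcPerm σ
end
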